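/- arXiv:1803.02513 — 5 statements merged into one kernel-verified Lean document; each statement's English description precedes it below -/
import Mathlib

section
/- Let 0 < a < b < ∞, let f and g be continuous functions on [a,b] with g(t) > 0 for all t ∈ [a,b], and define F(x) = ∫_a^b f(t)·e^{−xt} dt and G(x) = ∫_a^b g(t)·e^{−xt} dt for x > 0. Suppose there exists t* ∈ (a,b) such that f/g is strictly increasing on [a,t*] and strictly decreasing on [t*,b], and suppose the limit L = lim_{x→0⁺} ( (F′(x)/G′(x))·G(x) − F(x) ) exists. Then the ratio x ↦ F(x)/G(x) is decreasing on (0,∞) if and only if L ≥ 0. -/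
/-!
Write `M k h x = ∫_a^b t^k h(t) e^{-xt} dt`, so `F = M 0 f`, `F' = -M 1 f`, and put
`V = M 1 f * M 0 g - M 0 f * M 1 g`. Then `(F/G)' = -V / G²` and `H = V / M 1 g`, so `F/G`
decreases on `(0, ∞)` iff `V ≥ 0` there, and `L = V 0 / M 1 g 0`. Unimodality of `f/g` gives
`V' > 0` at every zero of `V`: there `χ = M 0 f - M 0 g * (f/g)` has vanishing moments of
order 0 and 1 against `g e^{-xt}`, is negative at `t*` and changes sign exactly at points
`c < t* < d`, so `V' = ∫ (t - c)(t - d) χ g e^{-xt} > 0`. Hence `V` never crosses zero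
downwards, and `V ≥ 0` on `(0, ∞)` iff `V 0 ≥ 0`.
-/

open Real Filter Set MeasureTheory Topology

noncomputable def laplaceMoment (a b : ℝ) (h : ℝ → ℝ) (k : ℕ) (x : ℝ) : ℝ :=
  ∫ t in a..b, t ^ k * h t * exp (-x * t)

section LaplaceMoment

variable {a b : ℝ} {h : ℝ → ℝ}

lemma intervalIntegrable_laplaceMoment (hab : a ≤ b) (hh : ContinuousOn h (Icc a b)) (k : ℕ)
    (x : ℝ) : IntervalIntegrable (fun t => t ^ k * h t * exp (-x * t)) volume a b :=
  ContinuousOn.intervalIntegrable_of_Icc hab (by fun_prop)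

lemma hasDerivAt_laplaceMoment (hab : a ≤ b) (hh : ContinuousOn h (Icc a b)) (k : ℕ) (x₀ : ℝ) :
    HasDerivAt (laplaceMoment a b h k) (-laplaceMoment a b h (k + 1) x₀) x₀ := by
  have hmaps : MapsTo (fun p : ℝ × ℝ => p.2) (Metric.closedBall x₀ 1 ×ˢ Icc a b) (Icc a b) :=
    fun p hp => hp.2
  have hK : IsCompact (Metric.closedBall x₀ 1 ×ˢ Icc a b) :=
    (isCompact_closedBall x₀ 1).prod isCompact_Icc
  obtain ⟨C, hC⟩ := hK.exists_bound_of_continuousOn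
    (f := fun p : ℝ × ℝ => p.2 ^ k * h p.2 * (exp (-p.1 * p.2) * -p.2)) (by fun_prop)
  have hmeas : ∀ x, AEStronglyMeasurable (fun t => t ^ k * h t * exp (-x * t))
      (volume.restrict (uIoc a b)) := fun x =>
    (intervalIntegrable_laplaceMoment hab hh k x).def'.aestronglyMeasurable
  have key := intervalIntegral.hasDerivAt_integral_of_dominated_loc_of_deriv_le
    (F := fun x t => t ^ k * h t * exp (-x * t))
    (F' := fun x t => t ^ k * h t * (exp (-x * t) * -t)) (bound := fun _ => C)
    (Metric.closedBall_mem_nhds x₀ one_pos) (Eventually.of_forall hmeas)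
    (intervalIntegrable_laplaceMoment hab hh k x₀) ?_ ?_ intervalIntegrable_const ?_
  · refine (key.2 : HasDerivAt (laplaceMoment a b h k) _ x₀).congr_deriv ?_
    simp only [laplaceMoment, ← intervalIntegral.integral_neg]
    congr 1 with t
    ring
  · exact ((intervalIntegrable_laplaceMoment hab hh (k + 1) x₀).neg.def'.aestronglyMeasurable).congr
      (Eventually.of_forall fun t => by simp only [Pi.neg_apply, pow_succ]; ring)
  · refine Eventually.of_forall fun t ht x hx => hC (x, t) ⟨hx, ?_⟩
    rw [uIoc_of_le hab] at ht
    exact Ioc_subset_Icc_self ht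
  · refine Eventually.of_forall fun t _ x _ => ?_
    exact (((hasDerivAt_id x).neg.mul_const t).exp.congr_deriv (by simp)).const_mul _

lemma laplaceMoment_pos (hab : a < b) (hh : ContinuousOn h (Icc a b)) {k : ℕ}
    (hpos : ∀ t ∈ Ioo a b, 0 < t ^ k * h t) (x : ℝ) : 0 < laplaceMoment a b h k x :=
  intervalIntegral.intervalIntegral_pos_of_pos_on (intervalIntegrable_laplaceMoment hab.le hh k x)
    (fun t ht => mul_pos (hpos t ht) (exp_pos _)) hab

lemma laplaceMoment_mul_sub_mul {u v : ℝ → ℝ} (hab : a ≤ b) (hu : ContinuousOn u (Icc a b))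
    (hv : ContinuousOn v (Icc a b)) (p q : ℝ) (k : ℕ) (x : ℝ) :
    laplaceMoment a b (fun t => p * u t - q * v t) k x =
      p * laplaceMoment a b u k x - q * laplaceMoment a b v k x := by
  simp only [laplaceMoment, ← intervalIntegral.integral_const_mul]
  rw [← intervalIntegral.integral_sub ((intervalIntegrable_laplaceMoment hab hu k x).const_mul p)
    ((intervalIntegrable_laplaceMoment hab hv k x).const_mul q)]
  congr 1 with t
  ring

lemma integral_mul_sub_mul_sub_mul_exp (hab : a ≤ b) (hh : ContinuousOn h (Icc a b))
    (c d x : ℝ) :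
    ∫ t in a..b, (t - c) * (t - d) * h t * exp (-x * t) =
      laplaceMoment a b h 2 x - (c + d) * laplaceMoment a b h 1 x +
        c * d * laplaceMoment a b h 0 x := by
  have hi := intervalIntegrable_laplaceMoment hab hh
  simp only [laplaceMoment, ← intervalIntegral.integral_const_mul]
  rw [← intervalIntegral.integral_sub (hi 2 x) ((hi 1 x).const_mul _),
    ← intervalIntegral.integral_add ((hi 2 x).sub ((hi 1 x).const_mul _)) ((hi 0 x).const_mul _)]
  congr 1 with t
  ring

end LaplaceMoment

section SignChange

variable {χ : ℝ → ℝ} {a b s : ℝ}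

lemma exists_pos_iff_lt_of_strictAntiOn (has : a < s) (hχc : ContinuousOn χ (Icc a s))
    (hχ : StrictAntiOn χ (Icc a s)) (hs : χ s < 0) :
    ∃ c < s, ∀ t ∈ Icc a s, 0 < χ t ↔ t < c := by
  by_cases ha : 0 < χ a
  · obtain ⟨c, hc, hc0⟩ := intermediate_value_Icc' has.le hχc ⟨hs.le, ha.le⟩
    refine ⟨c, hc.2.lt_of_ne (by rintro rfl; linarith), fun t ht => ?_⟩
    rw [← hc0]
    exact hχ.lt_iff_gt hc ht
  · exact ⟨a, has, fun t ht =>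
      iff_of_false (by linarith [hχ.antitoneOn (left_mem_Icc.2 has.le) ht ht.1]) (not_lt.2 ht.1)⟩

lemma exists_pos_iff_gt_of_strictMonoOn (hsb : s < b) (hχc : ContinuousOn χ (Icc s b))
    (hχ : StrictMonoOn χ (Icc s b)) (hs : χ s < 0) :
    ∃ d > s, ∀ t ∈ Icc s b, 0 < χ t ↔ d < t := by
  have hneg : MapsTo Neg.neg (Icc (-b) (-s)) (Icc s b) := fun t ht =>
    ⟨le_neg_of_le_neg ht.2, neg_le.1 ht.1⟩
  obtain ⟨c, hcs, hc⟩ := exists_pos_iff_lt_of_strictAntiOn (χ := fun t => χ (-t))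
    (neg_lt_neg hsb) (hχc.comp continuousOn_neg hneg)
    (fun u hu v hv huv => hχ (hneg hv) (hneg hu) (neg_lt_neg huv)) (by simpa using hs)
  refine ⟨-c, lt_neg_of_lt_neg hcs, fun t ht => ?_⟩
  simpa [neg_lt] using hc (-t) ⟨neg_le_neg ht.2, neg_le_neg ht.1⟩

lemma exists_mul_sub_mul_sub_nonneg (hs : s ∈ Ioo a b) (hχc : ContinuousOn χ (Icc a b))
    (hanti : StrictAntiOn χ (Icc a s)) (hmono : StrictMonoOn χ (Icc s b)) (hχs : χ s < 0) :
    ∃ c d, c < s ∧ s < d ∧ ∀ t ∈ Icc a b, 0 ≤ (t - c) * (t - d) * χ t := by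
  obtain ⟨c, hcs, hc⟩ := exists_pos_iff_lt_of_strictAntiOn hs.1
    (hχc.mono (Icc_subset_Icc_right hs.2.le)) hanti hχs
  obtain ⟨d, hds, hd⟩ := exists_pos_iff_gt_of_strictMonoOn hs.2
    (hχc.mono (Icc_subset_Icc_left hs.1.le)) hmono hχs
  refine ⟨c, d, hcs, hds, fun t ht => ?_⟩
  rcases le_total t s with hts | hst
  · have hχt := hc t ⟨ht.1, hts⟩
    by_cases htc : t < c
    · exact mul_nonneg (mul_nonneg_of_nonpos_of_nonpos (by linarith) (by linarith))
        (hχt.2 htc).le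
    · exact mul_nonneg_of_nonpos_of_nonpos
        (mul_nonpos_of_nonneg_of_nonpos (by linarith) (by linarith)) (not_lt.1 (mt hχt.1 htc))
  · have hχt := hd t ⟨hst, ht.2⟩
    by_cases hdt : d < t
    · exact mul_nonneg (mul_nonneg (by linarith) (by linarith)) (hχt.2 hdt).le
    · exact mul_nonneg_of_nonpos_of_nonpos
        (mul_nonpos_of_nonneg_of_nonpos (by linarith) (by linarith)) (not_lt.1 (mt hχt.1 hdt))

end SignChange

lemma forall_Ioi_nonneg_iff_of_hasDerivAt {V V' : ℝ → ℝ} (hV : ∀ x, HasDerivAt V (V' x) x)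
    (hcross : ∀ x, V x = 0 → 0 < V' x) (x₀ : ℝ) : (∀ x ∈ Ioi x₀, 0 ≤ V x) ↔ 0 ≤ V x₀ := by
  refine ⟨fun h => ge_of_tendsto ((hV x₀).continuousAt.tendsto.mono_left nhdsWithin_le_nhds)
    (eventually_nhdsWithin_of_forall h), fun h₀ x hx => ?_⟩
  have := image_le_of_deriv_right_lt_deriv_boundary (f := -V) (f' := -V') (B := 0) (B' := 0)
    (fun y _ => (hV y).continuousAt.neg.continuousWithinAt)
    (fun y _ => (hV y).neg.hasDerivWithinAt) (by simpa using h₀) (fun _ => hasDerivAt_const _ _)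
    (fun y _ hy => by simpa using hcross y (neg_eq_zero.1 hy)) ⟨le_of_lt hx, le_rfl⟩
  simpa using this

lemma antitoneOn_iff_of_hasDerivAt {D : Set ℝ} (hD : Convex ℝ D) (hDo : IsOpen D)
    {q q' : ℝ → ℝ} (hq : ∀ x ∈ D, HasDerivAt q (q' x) x) :
    AntitoneOn q D ↔ ∀ x ∈ D, q' x ≤ 0 := by
  refine ⟨fun h x hx => ?_, fun h => ?_⟩
  · rw [← (hq x hx).deriv, ← derivWithin_of_isOpen hDo hx]
    exact h.derivWithin_nonpos
  · refine antitoneOn_of_deriv_nonpos hD (fun x hx => (hq x hx).continuousAt.continuousWithinAt)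
      (fun x hx => ?_) (fun x hx => ?_) <;> rw [hDo.interior_eq] at hx
    · exact (hq x hx).differentiableAt.differentiableWithinAt
    · exact (hq x hx).deriv ▸ h x hx

lemma apply_le_of_monotoneOn_of_antitoneOn {φ : ℝ → ℝ} {a b s t : ℝ} (hs : s ∈ Icc a b)
    (hinc : MonotoneOn φ (Icc a s)) (hdec : AntitoneOn φ (Icc s b)) (ht : t ∈ Icc a b) :
    φ t ≤ φ s := by
  rcases le_total t s with hts | hst
  · exact hinc ⟨ht.1, hts⟩ (right_mem_Icc.2 hs.1) hts
  · exact hdec (left_mem_Icc.2 hs.2) ⟨hst, ht.2⟩ hst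

lemma laplaceMoment_zero_lt_div_mul {a b s : ℝ} {f g : ℝ → ℝ} (hs : s ∈ Ioo a b)
    (hf : ContinuousOn f (Icc a b)) (hg : ContinuousOn g (Icc a b))
    (hgpos : ∀ t ∈ Icc a b, 0 < g t)
    (hinc : StrictMonoOn (fun t => f t / g t) (Icc a s))
    (hdec : StrictAntiOn (fun t => f t / g t) (Icc s b)) (x : ℝ) :
    laplaceMoment a b f 0 x < f s / g s * laplaceMoment a b g 0 x := by
  have hab : a < b := hs.1.trans hs.2
  have hfg : ∀ t ∈ Icc a b, f t = f t / g t * g t := fun t ht =>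
    (div_mul_cancel₀ _ (hgpos t ht).ne').symm
  rw [laplaceMoment, laplaceMoment, ← intervalIntegral.integral_const_mul]
  refine intervalIntegral.integral_lt_integral_of_continuousOn_of_le_of_exists_lt hab
    (by fun_prop) (by fun_prop) (fun t ht => ?_) ⟨a, left_mem_Icc.2 hab.le, ?_⟩
  · have ht' := Ioc_subset_Icc_self ht
    rw [hfg t ht', pow_zero, one_mul, one_mul, ← mul_assoc]
    exact mul_le_mul_of_nonneg_right (mul_le_mul_of_nonneg_right
      (apply_le_of_monotoneOn_of_antitoneOn (Ioo_subset_Icc_self hs) hinc.monotoneOn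
        hdec.antitoneOn ht') (hgpos t ht').le) (exp_pos _).le
  · rw [hfg a (left_mem_Icc.2 hab.le), pow_zero, one_mul, one_mul, ← mul_assoc]
    exact mul_lt_mul_of_pos_right (mul_lt_mul_of_pos_right
      (hinc (left_mem_Icc.2 hs.1.le) (right_mem_Icc.2 hs.1.le) hs.1)
      (hgpos a (left_mem_Icc.2 hab.le))) (exp_pos _)

theorem laplaceMoment_two_mul_lt_of_mul_eq {a b s : ℝ} {f g : ℝ → ℝ} (hs : s ∈ Ioo a b)
    (hf : ContinuousOn f (Icc a b)) (hg : ContinuousOn g (Icc a b))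
    (hgpos : ∀ t ∈ Icc a b, 0 < g t)
    (hinc : StrictMonoOn (fun t => f t / g t) (Icc a s))
    (hdec : StrictAntiOn (fun t => f t / g t) (Icc s b)) (x : ℝ)
    (hV : laplaceMoment a b f 1 x * laplaceMoment a b g 0 x =
      laplaceMoment a b f 0 x * laplaceMoment a b g 1 x) :
    laplaceMoment a b f 2 x * laplaceMoment a b g 0 x <
      laplaceMoment a b f 0 x * laplaceMoment a b g 2 x := by
  have hab : a < b := hs.1.trans hs.2
  set P := laplaceMoment a b f 0 x
  set W := laplaceMoment a b g 0 x
  have hW : 0 < W := laplaceMoment_pos hab hg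
    (fun t ht => by simpa using hgpos t (Ioo_subset_Icc_self ht)) x
  set χ := fun t => P - W * (f t / g t) with hχ_def
  have hχgf : ∀ t ∈ Icc a b, P * g t - W * f t = χ t * g t := fun t ht => by
    rw [hχ_def]
    field_simp [(hgpos t ht).ne']
  have hχs : χ s < 0 := by
    simp only [hχ_def]
    linarith [laplaceMoment_zero_lt_div_mul hs hf hg hgpos hinc hdec x]
  obtain ⟨c, d, hcs, hsd, hχ⟩ := exists_mul_sub_mul_sub_nonneg hs (χ := χ)
    (continuousOn_const.sub (continuousOn_const.mul (hf.div hg fun t ht => (hgpos t ht).ne')))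
    (fun u hu v hv huv => sub_lt_sub_left (mul_lt_mul_of_pos_left (hinc hu hv huv) hW) P)
    (fun u hu v hv huv => sub_lt_sub_left (mul_lt_mul_of_pos_left (hdec hu hv huv) hW) P) hχs
  have hint : 0 < ∫ t in a..b, (t - c) * (t - d) * (P * g t - W * f t) * exp (-x * t) := by
    have := intervalIntegral.integral_lt_integral_of_continuousOn_of_le_of_exists_lt hab
      (f := fun _ => 0) (g := fun t => (t - c) * (t - d) * (P * g t - W * f t) * exp (-x * t))
      continuousOn_const (by fun_prop) ?_ ⟨s, Ioo_subset_Icc_self hs, ?_⟩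
    · simpa using this
    · intro t ht
      rw [hχgf t (Ioc_subset_Icc_self ht), ← mul_assoc]
      exact mul_nonneg (mul_nonneg (hχ t (Ioc_subset_Icc_self ht))
        (hgpos t (Ioc_subset_Icc_self ht)).le) (exp_pos _).le
    · have hχs' : 0 < (s - c) * (s - d) * χ s :=
        mul_pos_of_neg_of_neg (mul_neg_of_pos_of_neg (sub_pos.2 hcs) (sub_neg.2 hsd)) hχs
      rw [hχgf s (Ioo_subset_Icc_self hs), ← mul_assoc]
      exact mul_pos (mul_pos hχs' (hgpos s (Ioo_subset_Icc_self hs))) (exp_pos _)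
  rw [integral_mul_sub_mul_sub_mul_exp hab.le (by fun_prop), laplaceMoment_mul_sub_mul hab.le hg hf,
    laplaceMoment_mul_sub_mul hab.le hg hf, laplaceMoment_mul_sub_mul hab.le hg hf] at hint
  linear_combination hint + (c + d) * hV

theorem stmt_0 (a b : ℝ) (ha : 0 < a) (hab : a < b)
    (f g : ℝ → ℝ)
    (hf : ContinuousOn f (Icc a b)) (hg : ContinuousOn g (Icc a b))
    (hgpos : ∀ t ∈ Icc a b, 0 < g t)
    (F G : ℝ → ℝ)
    (hF : ∀ x, F x = ∫ t in a..b, f t * Real.exp (-x * t))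
    (hG : ∀ x, G x = ∫ t in a..b, g t * Real.exp (-x * t))
    (tstar : ℝ) (htstar : tstar ∈ Ioo a b)
    (hinc : StrictMonoOn (fun t => f t / g t) (Icc a tstar))
    (hdec : StrictAntiOn (fun t => f t / g t) (Icc tstar b))
    (L : ℝ)
    (hL : Tendsto (fun x => deriv F x / deriv G x * G x - F x)
      (𝓝[>] (0 : ℝ)) (𝓝 L)) :
    AntitoneOn (fun x => F x / G x) (Ioi 0) ↔ 0 ≤ L := by
  obtain rfl : F = laplaceMoment a b f 0 := funext fun x => by simp [hF, laplaceMoment]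
  obtain rfl : G = laplaceMoment a b g 0 := funext fun x => by simp [hG, laplaceMoment]
  have hF' := hasDerivAt_laplaceMoment hab.le hf
  have hG' := hasDerivAt_laplaceMoment hab.le hg
  have hG₀ : ∀ x, 0 < laplaceMoment a b g 0 x := laplaceMoment_pos hab hg
    (fun t ht => by simpa using hgpos t (Ioo_subset_Icc_self ht))
  have hG₁ : ∀ x, 0 < laplaceMoment a b g 1 x := laplaceMoment_pos hab hg
    (fun t ht => by simpa using mul_pos (ha.trans ht.1) (hgpos t (Ioo_subset_Icc_self ht)))
  set V := fun x => laplaceMoment a b f 1 x * laplaceMoment a b g 0 x -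
    laplaceMoment a b f 0 x * laplaceMoment a b g 1 x with hV
  have hVderiv : ∀ x, HasDerivAt V (laplaceMoment a b f 0 x * laplaceMoment a b g 2 x -
      laplaceMoment a b f 2 x * laplaceMoment a b g 0 x) x := fun x =>
    (((hF' 1 x).mul (hG' 0 x)).sub ((hF' 0 x).mul (hG' 1 x))).congr_deriv (by ring)
  have hratio : ∀ x, HasDerivAt (fun x => laplaceMoment a b f 0 x / laplaceMoment a b g 0 x)
      (-V x / laplaceMoment a b g 0 x ^ 2) x := fun x =>
    ((hF' 0 x).div (hG' 0 x) (hG₀ x).ne').congr_deriv (by simp only [hV]; ring)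
  have hLV : L = V 0 / laplaceMoment a b g 1 0 := by
    refine tendsto_nhds_unique (hL.congr fun x => ?_)
      (((hVderiv 0).continuousAt.div (hG' 1 0).continuousAt (hG₁ 0).ne').tendsto.mono_left
        nhdsWithin_le_nhds)
    rw [(hF' 0 x).deriv, (hG' 0 x).deriv, Pi.div_apply, hV]
    field_simp [(hG₁ x).ne']
  rw [antitoneOn_iff_of_hasDerivAt (convex_Ioi 0) isOpen_Ioi fun x _ => hratio x, hLV,
    le_div_iff₀ (hG₁ 0), zero_mul, ← forall_Ioi_nonneg_iff_of_hasDerivAt hVderiv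
      (fun x hx => sub_pos.2 (laplaceMoment_two_mul_lt_of_mul_eq htstar hf hg hgpos hinc hdec x
        (sub_eq_zero.1 hx))) 0]
  refine forall₂_congr fun x _ => ?_
  rw [neg_div, neg_nonpos, le_div_iff₀ (pow_pos (hG₀ x) 2), zero_mul]
end

section
/- Let 0 < a < b < ∞, let f and g be continuous functions on [a,b] with g(t) > 0 for all t ∈ [a,b], and define F(x) = ∫_a^b f(t)·e^{−xt} dt and G(x) = ∫_a^b g(t)·e^{−xt} dt for x > 0. Then lim_{x→0⁺} F(x)/G(x) = (∫_a^b f(t) dt)/(∫_a^b g(t) dt) and lim_{x→∞} F(x)/G(x) = f(a)/g(a). -/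
/-!
As `x → 0⁺` the integrals depend continuously on `x`, so the ratio tends to its value at `0`.
As `x → ∞` the weight `e^{-xt}` concentrates at `t = a`: writing `f = (f a / g a) g + h` with
`h a = 0`, near `a` one has `|h| ≤ ε g`, while the contribution of `[q, b]` is `O(e^{-xq})` and
hence negligible against `G x ≥ e^{-xp} ∫_a^p g` for any `a < p < q`.
Thus `∫ h e^{-xt} = o(G)`.
-/

open Real Filter Set MeasureTheory Topology Asymptotics

section LaplaceIntegral

variable {a b : ℝ} {f g h φ : ℝ → ℝ}

lemma intervalIntegrable_mul_exp (hab : a ≤ b) (hφ : ContinuousOn φ (Icc a b)) (x : ℝ) :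
    IntervalIntegrable (fun t => φ t * exp (-x * t)) volume a b :=
  ((uIcc_of_le hab ▸ hφ).mul (by fun_prop)).intervalIntegrable

lemma continuous_integral_mul_exp (hab : a ≤ b) (hφ : ContinuousOn φ (Icc a b)) :
    Continuous fun x => ∫ t in a..b, φ t * exp (-x * t) := by
  -- only the values on `[a, b]` matter, so `φ` may be replaced by a continuous extension
  set ψ := IccExtend hab ((Icc a b).domRestrict φ)
  have hψ : Continuous ψ := hφ.domRestrict.Icc_extend'
  have hφψ : ∀ x, ∫ t in a..b, φ t * exp (-x * t) = ∫ t in a..b, ψ t * exp (-x * t) :=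
    fun x => intervalIntegral.integral_congr fun t ht => by
      rw [uIcc_of_le hab] at ht
      simp [ψ, IccExtend_of_mem hab _ ht, Set.domRestrict]
  simp_rw [hφψ]
  exact intervalIntegral.continuous_parametric_intervalIntegral_of_continuous' (by fun_prop) a b

lemma integral_mul_exp_pos (hab : a < b) (hg : ContinuousOn g (Icc a b))
    (hgpos : ∀ t ∈ Icc a b, 0 < g t) (x : ℝ) :
    0 < ∫ t in a..b, g t * exp (-x * t) :=
  intervalIntegral.intervalIntegral_pos_of_pos_on (intervalIntegrable_mul_exp hab.le hg x)
    (fun t ht => mul_pos (hgpos t (Ioo_subset_Icc_self ht)) (exp_pos _)) hab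

lemma exp_mul_integral_le_integral_mul_exp {x : ℝ} (hx : 0 ≤ x) (hab : a ≤ b)
    (hφ : ContinuousOn φ (Icc a b)) (hφ0 : ∀ t ∈ Icc a b, 0 ≤ φ t) :
    exp (-x * b) * ∫ t in a..b, φ t ≤ ∫ t in a..b, φ t * exp (-x * t) := by
  rw [← intervalIntegral.integral_const_mul]
  refine intervalIntegral.integral_mono_on hab
    ((uIcc_of_le hab ▸ hφ).intervalIntegrable.const_mul _)
    (intervalIntegrable_mul_exp hab hφ x) fun t ht => ?_
  rw [mul_comm]
  exact mul_le_mul_of_nonneg_left (exp_le_exp.2 (by nlinarith [ht.2])) (hφ0 t ht)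

lemma integral_mul_exp_le_exp_mul_integral {x : ℝ} (hx : 0 ≤ x) (hab : a ≤ b)
    (hφ : ContinuousOn φ (Icc a b)) (hφ0 : ∀ t ∈ Icc a b, 0 ≤ φ t) :
    ∫ t in a..b, φ t * exp (-x * t) ≤ exp (-x * a) * ∫ t in a..b, φ t := by
  rw [← intervalIntegral.integral_const_mul]
  refine intervalIntegral.integral_mono_on hab (intervalIntegrable_mul_exp hab hφ x)
    ((uIcc_of_le hab ▸ hφ).intervalIntegrable.const_mul _) fun t ht => ?_
  rw [mul_comm (exp _)]
  exact mul_le_mul_of_nonneg_left (exp_le_exp.2 (by nlinarith [ht.1])) (hφ0 t ht)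

lemma abs_integral_mul_exp_le (hab : a ≤ b) (x : ℝ) :
    |∫ t in a..b, φ t * exp (-x * t)| ≤ ∫ t in a..b, |φ t| * exp (-x * t) := by
  simpa only [abs_mul, abs_exp] using
    intervalIntegral.abs_integral_le_integral_abs (f := fun t => φ t * exp (-x * t)) hab

lemma integral_mul_exp_le_of_le {c : ℝ} (hac : a ≤ c) (hcb : c ≤ b)
    (hg : ContinuousOn g (Icc a b)) (hg0 : ∀ t ∈ Icc a b, 0 ≤ g t) (x : ℝ) :
    ∫ t in a..c, g t * exp (-x * t) ≤ ∫ t in a..b, g t * exp (-x * t) :=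
  intervalIntegral.integral_mono_interval le_rfl hac hcb
    ((ae_restrict_mem measurableSet_Ioc).mono fun t ht =>
      mul_nonneg (hg0 t (Ioc_subset_Icc_self ht)) (exp_pos _).le)
    (intervalIntegrable_mul_exp (hac.trans hcb) hg x)

lemma integral_mul_exp_tail_isLittleO {q : ℝ} (haq : a < q) (hqb : q ≤ b)
    (hh : ContinuousOn h (Icc q b)) (hg : ContinuousOn g (Icc a b))
    (hgpos : ∀ t ∈ Icc a b, 0 < g t) :
    (fun x => ∫ t in q..b, h t * exp (-x * t)) =o[atTop]
      fun x => ∫ t in a..b, g t * exp (-x * t) := by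
  set p := (a + q) / 2
  have hap : a < p := by simp only [p]; linarith
  have hpq : p < q := by simp only [p]; linarith
  have hg_ap : ContinuousOn g (Icc a p) := hg.mono (Icc_subset_Icc le_rfl (by linarith))
  have htail : (fun x => ∫ t in q..b, h t * exp (-x * t)) =O[atTop] fun x => exp (-x * q) := by
    refine IsBigO.of_bound (∫ t in q..b, |h t|) ?_
    filter_upwards [eventually_ge_atTop 0] with x hx
    rw [norm_eq_abs, norm_eq_abs, abs_exp, mul_comm]
    exact (abs_integral_mul_exp_le hqb x).trans
      (integral_mul_exp_le_exp_mul_integral hx hqb hh.abs fun t _ => abs_nonneg (h t))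
  have hexp : (fun x => exp (-x * q)) =o[atTop] fun x => exp (-x * p) := by
    rw [isLittleO_exp_comp_exp_comp]
    exact (tendsto_id.const_mul_atTop (sub_pos.2 hpq)).congr fun x => by simp only [id]; ring
  have hhead : (fun x => exp (-x * p)) =O[atTop] fun x => ∫ t in a..b, g t * exp (-x * t) := by
    have hC : 0 < ∫ t in a..p, g t := intervalIntegral.intervalIntegral_pos_of_pos_on
      ((uIcc_of_le hap.le ▸ hg_ap).intervalIntegrable)
      (fun t ht => hgpos t ⟨ht.1.le, by linarith [ht.2]⟩) hap
    refine IsBigO.of_bound (∫ t in a..p, g t)⁻¹ ?_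
    filter_upwards [eventually_ge_atTop 0] with x hx
    rw [norm_eq_abs, norm_eq_abs, abs_exp, inv_mul_eq_div, le_div_iff₀ hC]
    calc exp (-x * p) * ∫ t in a..p, g t
        ≤ ∫ t in a..p, g t * exp (-x * t) :=
          exp_mul_integral_le_integral_mul_exp hx hap.le hg_ap fun t ht =>
            (hgpos t ⟨ht.1, by linarith [ht.2]⟩).le
      _ ≤ ∫ t in a..b, g t * exp (-x * t) :=
          integral_mul_exp_le_of_le hap.le (by linarith) hg (fun t ht => (hgpos t ht).le) x
      _ ≤ _ := le_abs_self _
  exact htail.trans_isLittleO (hexp.trans_isBigO hhead)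

lemma exists_Icc_abs_le_mul_of_eq_zero (hab : a < b) (hh : ContinuousOn h (Icc a b))
    (ha : h a = 0) (hg : ContinuousOn g (Icc a b)) (hga : 0 < g a) {c : ℝ} (hc : 0 < c) :
    ∃ q, a < q ∧ q ≤ b ∧ ∀ t ∈ Icc a q, |h t| ≤ c * g t := by
  have hlim : Tendsto (fun t => c * g t - |h t|) (𝓝[≥] a) (𝓝 (c * g a - |h a|)) := by
    rw [← nhdsWithin_Icc_eq_nhdsGE hab]
    have ha' : a ∈ Icc a b := left_mem_Icc.2 hab.le
    exact ((hg a ha').const_mul c).sub (hh a ha').abs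
  rw [ha, abs_zero, sub_zero] at hlim
  obtain ⟨q, haq, hq⟩ := mem_nhdsGE_iff_exists_Icc_subset.1
    (hlim.eventually (eventually_ge_nhds (mul_pos hc hga)))
  refine ⟨min q b, lt_min haq hab, min_le_right _ _, fun t ht => ?_⟩
  exact sub_nonneg.1 (hq ⟨ht.1, ht.2.trans (min_le_left _ _)⟩)

lemma integral_mul_exp_isLittleO_of_eq_zero (hab : a < b) (hh : ContinuousOn h (Icc a b))
    (ha : h a = 0) (hg : ContinuousOn g (Icc a b)) (hgpos : ∀ t ∈ Icc a b, 0 < g t) :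
    (fun x => ∫ t in a..b, h t * exp (-x * t)) =o[atTop]
      fun x => ∫ t in a..b, g t * exp (-x * t) := by
  refine IsLittleO.of_bound fun ε hε => ?_
  obtain ⟨q, haq, hqb, hq⟩ := exists_Icc_abs_le_mul_of_eq_zero hab hh ha hg
    (hgpos a (left_mem_Icc.2 hab.le)) (half_pos hε)
  have hh_aq : ContinuousOn h (Icc a q) := hh.mono (Icc_subset_Icc le_rfl hqb)
  have hh_qb : ContinuousOn h (Icc q b) := hh.mono (Icc_subset_Icc haq.le le_rfl)
  have hg_aq : ContinuousOn g (Icc a q) := hg.mono (Icc_subset_Icc le_rfl hqb)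
  filter_upwards [(integral_mul_exp_tail_isLittleO haq hqb hh_qb hg hgpos).bound (half_pos hε)]
    with x hx
  have hhead :
      |∫ t in a..q, h t * exp (-x * t)| ≤ ε / 2 * ‖∫ t in a..b, g t * exp (-x * t)‖ :=
    calc |∫ t in a..q, h t * exp (-x * t)|
        ≤ ∫ t in a..q, |h t| * exp (-x * t) := abs_integral_mul_exp_le haq.le x
      _ ≤ ∫ t in a..q, ε / 2 * g t * exp (-x * t) :=
          intervalIntegral.integral_mono_on haq.le (intervalIntegrable_mul_exp haq.le hh_aq.abs x)
            (intervalIntegrable_mul_exp haq.le (continuousOn_const.mul hg_aq) x) fun t ht =>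
              mul_le_mul_of_nonneg_right (hq t ht) (exp_pos _).le
      _ = ε / 2 * ∫ t in a..q, g t * exp (-x * t) := by
          simp only [mul_assoc, intervalIntegral.integral_const_mul]
      _ ≤ ε / 2 * ‖∫ t in a..b, g t * exp (-x * t)‖ := by
          gcongr
          exact (integral_mul_exp_le_of_le haq.le hqb hg (fun t ht => (hgpos t ht).le) x).trans
            (le_abs_self _)
  rw [← intervalIntegral.integral_add_adjacent_intervals
    (intervalIntegrable_mul_exp haq.le hh_aq x) (intervalIntegrable_mul_exp hqb hh_qb x)]
  calc _ ≤ _ := norm_add_le _ _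
    _ ≤ _ := add_le_add hhead hx
    _ = _ := by ring

lemma tendsto_integral_mul_exp_div_atTop (hab : a < b)
    (hf : ContinuousOn f (Icc a b)) (hg : ContinuousOn g (Icc a b))
    (hgpos : ∀ t ∈ Icc a b, 0 < g t) :
    Tendsto (fun x => (∫ t in a..b, f t * exp (-x * t)) / ∫ t in a..b, g t * exp (-x * t))
      atTop (𝓝 (f a / g a)) := by
  set c := f a / g a
  have hga : g a ≠ 0 := (hgpos a (left_mem_Icc.2 hab.le)).ne'
  have hsub : ContinuousOn (fun t => f t - c * g t) (Icc a b) := hf.sub (continuousOn_const.mul hg)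
  have hsub_a : f a - c * g a = 0 := sub_eq_zero.2 (div_mul_cancel₀ _ hga).symm
  have hratio := (integral_mul_exp_isLittleO_of_eq_zero hab hsub hsub_a hg hgpos
    ).tendsto_div_nhds_zero
  rw [← zero_add c]
  refine (hratio.add_const c).congr fun x => ?_
  have hG := (integral_mul_exp_pos hab hg hgpos x).ne'
  simp only [sub_mul, mul_assoc]
  rw [intervalIntegral.integral_sub (intervalIntegrable_mul_exp hab.le hf x)
    ((intervalIntegrable_mul_exp hab.le hg x).const_mul c), intervalIntegral.integral_const_mul,
    sub_div, mul_div_assoc, div_self hG, mul_one, sub_add_cancel]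

end LaplaceIntegral

theorem stmt_1_general (a b : ℝ) (hab : a < b)
    (f g : ℝ → ℝ)
    (hf : ContinuousOn f (Icc a b)) (hg : ContinuousOn g (Icc a b))
    (hgpos : ∀ t ∈ Icc a b, 0 < g t)
    (F G : ℝ → ℝ)
    (hF : ∀ x, F x = ∫ t in a..b, f t * Real.exp (-x * t))
    (hG : ∀ x, G x = ∫ t in a..b, g t * Real.exp (-x * t)) :
    Tendsto (fun x => F x / G x) (𝓝[>] (0 : ℝ))
      (𝓝 ((∫ t in a..b, f t) / (∫ t in a..b, g t))) ∧
    Tendsto (fun x => F x / G x) atTop (𝓝 (f a / g a)) := by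
  simp only [hF, hG]
  refine ⟨?_, tendsto_integral_mul_exp_div_atTop hab hf hg hgpos⟩
  have hcont : Continuous fun x =>
      (∫ t in a..b, f t * exp (-x * t)) / ∫ t in a..b, g t * exp (-x * t) :=
    (continuous_integral_mul_exp hab.le hf).div (continuous_integral_mul_exp hab.le hg)
      fun x => (integral_mul_exp_pos hab hg hgpos x).ne'
  simpa using hcont.continuousWithinAt.tendsto (x := 0) (s := Ioi 0)

theorem stmt_1 (a b : ℝ) (ha : 0 < a) (hab : a < b)
    (f g : ℝ → ℝ)
    (hf : ContinuousOn f (Icc a b)) (hg : ContinuousOn g (Icc a b))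
    (hgpos : ∀ t ∈ Icc a b, 0 < g t)
    (F G : ℝ → ℝ)
    (hF : ∀ x, F x = ∫ t in a..b, f t * Real.exp (-x * t))
    (hG : ∀ x, G x = ∫ t in a..b, g t * Real.exp (-x * t)) :
    Tendsto (fun x => F x / G x) (𝓝[>] (0 : ℝ))
      (𝓝 ((∫ t in a..b, f t) / (∫ t in a..b, g t))) ∧
    Tendsto (fun x => F x / G x) atTop (𝓝 (f a / g a)) :=
  stmt_1_general a b hab f g hf hg hgpos F G hF hG
end

section
/- Let 0 < a < b < ∞, let f and g be continuous functions on [a,b] with g(t) > 0 for all t ∈ [a,b], and define F(x) = ∫_a^b f(t)·e^{−xt} dt and G(x) = ∫_a^b g(t)·e^{−xt} dt for x > 0. Suppose there exists t* ∈ (a,b) such that f/g is strictly increasing on [a,t*] and strictly decreasing on [t*,b], and suppose lim_{x→0⁺} ( (F′(x)/G′(x))·G(x) − F(x) ) exists and is negative. Then there exists x* > 0 such that F/G is increasing on (0,x*) and decreasing on (x*,∞). -/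
/-
Fix a level `c`. Where `G > 0`, the superlevel set `{x | c ≤ F x / G x}` is `{x | 0 ≤ ψ x}`,
with `ψ` the Laplace transform of `h = f - c g`. Since `f / g` is unimodal, `h ≥ 0` on some
`[p, q]` and `h ≤ 0` outside, i.e. `(p - t) (q - t) h t ≤ 0`. The derivative of `e^{px}` times
the transform of `(q - t) h` is `e^{px}` times the transform of `(p - t) (q - t) h ≤ 0`, so the
transform of `(q - t) h` changes sign at most once, from `+` to `-`. Since it is `e^{-qx}` times
the derivative of `e^{qx} ψ`, that function increases and then decreases, so `{0 ≤ ψ}` is an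
interval: `F / G` is quasiconcave.

`F / G` is not antitone on `(0, ∞)`, since otherwise `F'/G' G - F = (F/G)' G² / G' ≥ 0` there
(`G' < 0` because `a > 0`), against the negative limit at `0`. It is not monotone either, since
for large `x` it approaches `f a / g a` from above. A quasiconcave function on `(0, ∞)` that is
neither monotone nor antitone increases up to some `x*` and decreases afterwards.
-/

open Real Filter Set MeasureTheory Topology

section Quasiconcave

variable {s : Set ℝ} {f : ℝ → ℝ}

theorem QuasiconcaveOn.min_le {x₁ x₂ x₃ : ℝ} (hf : QuasiconcaveOn ℝ s f) (hx₁ : x₁ ∈ s)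
    (hx₃ : x₃ ∈ s) (h₁₂ : x₁ ≤ x₂) (h₂₃ : x₂ ≤ x₃) : min (f x₁) (f x₃) ≤ f x₂ :=
  ((hf _).ordConnected.out ⟨hx₁, min_le_left _ _⟩ ⟨hx₃, min_le_right _ _⟩ ⟨h₁₂, h₂₃⟩).2

theorem QuasiconcaveOn.monotoneOn_of_lt {z y : ℝ} (hf : QuasiconcaveOn ℝ s f) (hy : y ∈ s)
    (hzy : z < y) (hlt : f z < f y) : MonotoneOn f (s ∩ Iic z) := by
  intro x₁ hx₁ x₂ hx₂ h₁₂
  have hx₂y : f x₂ < f y := by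
    rcases min_le_iff.1 (hf.min_le hx₂.1 hy hx₂.2 hzy.le) with h | h
    · exact h.trans_lt hlt
    · exact absurd h hlt.not_ge
  rcases min_le_iff.1 (hf.min_le hx₁.1 hy h₁₂ (hx₂.2.trans hzy.le)) with h | h
  · exact h
  · exact absurd h hx₂y.not_ge

theorem QuasiconcaveOn.exists_monotoneOn_antitoneOn {c : ℝ} (hf : QuasiconcaveOn ℝ (Ioi c) f)
    (hanti : ¬ AntitoneOn f (Ioi c)) (hmono : ¬ MonotoneOn f (Ioi c)) :
    ∃ x₀ > c, MonotoneOn f (Ioo c x₀) ∧ AntitoneOn f (Ioi x₀) := by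
  set T := {z ∈ Ioi c | ∃ y ∈ Ioi c, z < y ∧ f z < f y}
  have hmono_T : ∀ z ∈ T, MonotoneOn f (Ioi c ∩ Iic z) := fun z ⟨_, y, hy, hzy, hlt⟩ =>
    hf.monotoneOn_of_lt hy hzy hlt
  obtain ⟨u, hu, v, hv, huv, hlt⟩ : ∃ u ∈ Ioi c, ∃ v ∈ Ioi c, u ≤ v ∧ f u < f v := by
    simpa [AntitoneOn] using hanti
  have huT : u ∈ T := ⟨hu, v, hv, huv.lt_of_ne (by rintro rfl; exact hlt.false), hlt⟩
  obtain ⟨X, hX, w, hw, hXw, hwX⟩ : ∃ X ∈ Ioi c, ∃ w ∈ Ioi c, X ≤ w ∧ f w < f X := by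
    simpa [MonotoneOn] using hmono
  -- a point of `T` beyond `w` would force `f X ≤ f w`
  have hT_bdd : BddAbove T := ⟨w, fun z hz => le_of_not_gt fun hwz =>
    (hmono_T z hz ⟨hX, hXw.trans hwz.le⟩ ⟨hw, hwz.le⟩ hXw).not_gt hwX⟩
  refine ⟨sSup T, hu.trans_le (le_csSup hT_bdd huT), fun x₁ hx₁ x₂ hx₂ h₁₂ => ?_,
    fun x₂ hx₂ x₃ hx₃ h₂₃ => ?_⟩
  · obtain ⟨z, hzT, hx₂z⟩ := exists_lt_of_lt_csSup ⟨u, huT⟩ hx₂.2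
    exact hmono_T z hzT ⟨hx₁.1, h₁₂.trans hx₂z.le⟩ ⟨hx₂.1, hx₂z.le⟩ h₁₂
  · have hc : c < x₂ := hu.trans_le ((le_csSup hT_bdd huT).trans hx₂.le)
    refine le_of_not_gt fun hlt₂₃ => (le_csSup hT_bdd ?_).not_gt hx₂
    exact ⟨hc, x₃, hc.trans_le h₂₃, h₂₃.lt_of_ne (by rintro rfl; exact hlt₂₃.false), hlt₂₃⟩

theorem quasiconcaveOn_univ_of_hasDerivAt {A A' : ℝ → ℝ} (hA : ∀ x, HasDerivAt A (A' x) x)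
    (hA' : ∀ x, (∀ y ∈ Ici x, A' y ≤ 0) ∨ ∀ y ∈ Iic x, 0 ≤ A' y) :
    QuasiconcaveOn ℝ univ A := by
  refine fun r => convex_iff_ordConnected.2 ⟨fun x₁ hx₁ x₃ hx₃ x₂ hx₂ => ⟨trivial, ?_⟩⟩
  have hcont : Continuous A := continuous_iff_continuousAt.2 fun x => (hA x).continuousAt
  rcases hA' x₂ with hneg | hpos
  · refine hx₃.2.trans (antitoneOn_of_hasDerivWithinAt_nonpos (convex_Ici x₂) hcont.continuousOn
      (fun x _ => (hA x).hasDerivWithinAt) (fun x hx => hneg x ?_) self_mem_Ici hx₂.2 hx₂.2)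
    exact interior_subset hx
  · refine hx₁.2.trans (monotoneOn_of_hasDerivWithinAt_nonneg (convex_Iic x₂) hcont.continuousOn
      (fun x _ => (hA x).hasDerivWithinAt) (fun x hx => hpos x ?_) hx₂.1 self_mem_Iic hx₂.1)
    exact interior_subset hx

end Quasiconcave

theorem exists_sign_pattern_of_monotoneOn_antitoneOn {r : ℝ → ℝ} {a b s : ℝ}
    (hmono : MonotoneOn r (Icc a s)) (hanti : AntitoneOn r (Icc s b)) (c : ℝ) :
    ∃ p q, ∀ t ∈ Icc a b, (p - t) * (q - t) * (r t - c) ≤ 0 := by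
  set S := {t ∈ Icc a b | c ≤ r t}
  have hS_below : BddBelow S := ⟨a, fun t ht => ht.1.1⟩
  have hS_above : BddAbove S := ⟨b, fun t ht => ht.1.2⟩
  rcases S.eq_empty_or_nonempty with hS | hS
  · refine ⟨0, 0, fun t ht => mul_nonpos_of_nonneg_of_nonpos (by nlinarith) ?_⟩
    have : t ∉ S := hS ▸ notMem_empty t
    exact (sub_neg.2 (not_le.1 fun h => this ⟨ht, h⟩)).le
  refine ⟨sInf S, sSup S, fun t ht => ?_⟩
  by_cases htS : c ≤ r t
  · refine mul_nonpos_of_nonpos_of_nonneg (mul_nonpos_of_nonpos_of_nonneg ?_ ?_) (sub_nonneg.2 htS)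
    · exact sub_nonpos.2 (csInf_le hS_below ⟨ht, htS⟩)
    · exact sub_nonneg.2 (le_csSup hS_above ⟨ht, htS⟩)
  refine mul_nonpos_of_nonneg_of_nonpos ?_ (sub_neg.2 (not_le.1 htS)).le
  -- the superlevel set `S` is an interval, so it contains every point between its extremities
  have hout : t ≤ sInf S ∨ sSup S ≤ t := by
    by_contra! hin
    obtain ⟨s₁, hs₁, hs₁t⟩ := exists_lt_of_csInf_lt hS hin.1
    obtain ⟨s₂, hs₂, hts₂⟩ := exists_lt_of_lt_csSup hS hin.2
    refine htS ?_
    rcases le_total t s with hts | hst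
    · exact hs₁.2.trans (hmono ⟨hs₁.1.1, hs₁t.le.trans hts⟩ ⟨ht.1, hts⟩ hs₁t.le)
    · exact hs₂.2.trans (hanti ⟨hst, ht.2⟩ ⟨hst.trans hts₂.le, hs₂.1.2⟩ hts₂.le)
  have hle : sInf S ≤ sSup S := csInf_le_csSup hS hS_below hS_above
  rcases hout with h | h
  · exact mul_nonneg (by linarith) (by linarith)
  · exact mul_nonneg_of_nonpos_of_nonpos (by linarith) (by linarith)

theorem deriv_div_deriv_mul_sub_nonneg_of_antitoneOn {F G : ℝ → ℝ} {s : Set ℝ} {x : ℝ}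
    (hs : IsOpen s) (hx : x ∈ s) (hR : AntitoneOn (fun y => F y / G y) s)
    (hF : DifferentiableAt ℝ F x) (hG : DifferentiableAt ℝ G x) (hGx : G x ≠ 0)
    (hG' : deriv G x < 0) : 0 ≤ deriv F x / deriv G x * G x - F x := by
  have hR' := hR.derivWithin_nonpos (x := x)
  rw [derivWithin_of_isOpen hs hx, deriv_fun_div hF hG hGx] at hR'
  have hH : deriv F x / deriv G x * G x - F x =
      (deriv F x * G x - F x * deriv G x) / G x ^ 2 * (G x ^ 2 / deriv G x) := by
    field_simp [hG'.ne]
  rw [hH]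
  exact mul_nonneg_of_nonpos_of_nonpos hR' (div_nonpos_of_nonneg_of_nonpos (sq_nonneg _) hG'.le)

noncomputable def finiteLaplace (a b : ℝ) (k : ℝ → ℝ) (x : ℝ) : ℝ :=
  ∫ t in a..b, k t * exp (-x * t)

section finiteLaplace

variable {a b : ℝ} {k k₁ k₂ : ℝ → ℝ}

theorem ContinuousOn.mul_exp_neg_mul (hk : ContinuousOn k (Icc a b)) (x : ℝ) :
    ContinuousOn (fun t => k t * exp (-x * t)) (Icc a b) :=
  hk.mul (by fun_prop)

theorem intervalIntegrable_mul_exp_neg_mul (hab : a ≤ b) (hk : ContinuousOn k (Icc a b))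
    (x : ℝ) : IntervalIntegrable (fun t => k t * exp (-x * t)) volume a b :=
  (hk.mul_exp_neg_mul x).intervalIntegrable_of_Icc hab

theorem finiteLaplace_add (hab : a ≤ b) (hk₁ : ContinuousOn k₁ (Icc a b))
    (hk₂ : ContinuousOn k₂ (Icc a b)) (x : ℝ) :
    finiteLaplace a b (fun t => k₁ t + k₂ t) x =
      finiteLaplace a b k₁ x + finiteLaplace a b k₂ x := by
  simp only [finiteLaplace, add_mul]
  exact intervalIntegral.integral_add (intervalIntegrable_mul_exp_neg_mul hab hk₁ x)
    (intervalIntegrable_mul_exp_neg_mul hab hk₂ x)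

theorem finiteLaplace_sub (hab : a ≤ b) (hk₁ : ContinuousOn k₁ (Icc a b))
    (hk₂ : ContinuousOn k₂ (Icc a b)) (x : ℝ) :
    finiteLaplace a b (fun t => k₁ t - k₂ t) x =
      finiteLaplace a b k₁ x - finiteLaplace a b k₂ x := by
  simp only [finiteLaplace, sub_mul]
  exact intervalIntegral.integral_sub (intervalIntegrable_mul_exp_neg_mul hab hk₁ x)
    (intervalIntegrable_mul_exp_neg_mul hab hk₂ x)

theorem finiteLaplace_const_mul (c x : ℝ) :
    finiteLaplace a b (fun t => c * k t) x = c * finiteLaplace a b k x := by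
  simp only [finiteLaplace, mul_assoc, intervalIntegral.integral_const_mul]

theorem finiteLaplace_pos (hab : a < b) (hk : ContinuousOn k (Icc a b))
    (hpos : ∀ t ∈ Ioo a b, 0 < k t) (x : ℝ) : 0 < finiteLaplace a b k x :=
  intervalIntegral.intervalIntegral_pos_of_pos_on (intervalIntegrable_mul_exp_neg_mul hab.le hk x)
    (fun t ht => mul_pos (hpos t ht) (exp_pos _)) hab

theorem finiteLaplace_nonpos (hab : a ≤ b) (hk : ∀ t ∈ Icc a b, k t ≤ 0) (x : ℝ) :
    finiteLaplace a b k x ≤ 0 := by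
  have : 0 ≤ ∫ t in a..b, -(k t * exp (-x * t)) := intervalIntegral.integral_nonneg hab
    fun t ht => neg_nonneg.2 (mul_nonpos_of_nonpos_of_nonneg (hk t ht) (exp_pos _).le)
  rwa [intervalIntegral.integral_neg, neg_nonneg] at this

theorem hasDerivAt_finiteLaplace (hab : a ≤ b) (hk : ContinuousOn k (Icc a b)) (x : ℝ) :
    HasDerivAt (finiteLaplace a b k) (finiteLaplace a b (fun t => -t * k t) x) x := by
  have hk' : ContinuousOn (fun t => -t * k t) (Icc a b) := by fun_prop
  have hmeas : ∀ {k : ℝ → ℝ}, ContinuousOn k (Icc a b) → ∀ y,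
      AEStronglyMeasurable (fun t => k t * exp (-y * t)) (volume.restrict (uIoc a b)) :=
    fun hk y => ((hk.mul_exp_neg_mul y).mono (uIoc_of_le hab ▸ Ioc_subset_Icc_self))
      |>.aestronglyMeasurable measurableSet_uIoc
  obtain ⟨M, hM⟩ := ((isCompact_closedBall x 1).prod isCompact_Icc).exists_bound_of_continuousOn
    (f := fun p : ℝ × ℝ => -p.2 * k p.2 * exp (-p.1 * p.2))
    ((hk'.comp continuousOn_snd fun p hp => hp.2).mul (by fun_prop))
  refine (intervalIntegral.hasDerivAt_integral_of_dominated_loc_of_deriv_le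
    (F := fun y t => k t * exp (-y * t)) (F' := fun y t => -t * k t * exp (-y * t))
    (bound := fun _ => M) (Metric.ball_mem_nhds x one_pos) (Eventually.of_forall (hmeas hk))
    (intervalIntegrable_mul_exp_neg_mul hab hk x) (hmeas hk' x) ?_ intervalIntegrable_const ?_).2
  · refine Eventually.of_forall fun t ht y hy => hM (y, t) ⟨Metric.ball_subset_closedBall hy, ?_⟩
    exact Ioc_subset_Icc_self ((uIoc_of_le hab) ▸ ht)
  · refine Eventually.of_forall fun t _ y _ => ?_
    exact (((hasDerivAt_neg' y).mul_const t).exp.const_mul (k t)).congr_deriv (by ring)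

theorem hasDerivAt_exp_mul_finiteLaplace (hab : a ≤ b) (hk : ContinuousOn k (Icc a b))
    (c x : ℝ) : HasDerivAt (fun y => exp (c * y) * finiteLaplace a b k y)
      (exp (c * x) * finiteLaplace a b (fun t => (c - t) * k t) x) x := by
  have hsplit : (fun t => (c - t) * k t) = fun t => c * k t + -t * k t := by ext; ring
  refine (((hasDerivAt_id' x).const_mul c).exp.mul
    (hasDerivAt_finiteLaplace hab hk x)).congr_deriv ?_
  rw [hsplit, finiteLaplace_add hab (k₁ := fun t => c * k t) (k₂ := fun t => -t * k t)
    (by fun_prop) (by fun_prop), finiteLaplace_const_mul]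
  ring

end finiteLaplace

theorem quasiconcaveOn_exp_mul_finiteLaplace {a b p q : ℝ} {k : ℝ → ℝ} (hab : a ≤ b)
    (hk : ContinuousOn k (Icc a b)) (hsign : ∀ t ∈ Icc a b, (p - t) * (q - t) * k t ≤ 0) :
    QuasiconcaveOn ℝ univ (fun x => exp (q * x) * finiteLaplace a b k x) := by
  set u := finiteLaplace a b (fun t => (q - t) * k t)
  have hu : Antitone (fun x => exp (p * x) * u x) :=
    antitone_of_hasDerivAt_nonpos (hasDerivAt_exp_mul_finiteLaplace hab (by fun_prop) p)
      fun x => mul_nonpos_of_nonneg_of_nonpos (exp_pos _).le <| finiteLaplace_nonpos hab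
        (fun t ht => by simpa only [mul_assoc] using hsign t ht) x
  refine quasiconcaveOn_univ_of_hasDerivAt (hasDerivAt_exp_mul_finiteLaplace hab hk q) fun x => ?_
  rcases le_or_gt (u x) 0 with hux | hux
  · refine Or.inl fun y hy => mul_nonpos_of_nonneg_of_nonpos (exp_pos _).le ?_
    have := (hu hy).trans (mul_nonpos_of_nonneg_of_nonpos (exp_pos (p * x)).le hux)
    exact nonpos_of_mul_nonpos_right this (exp_pos _)
  · refine Or.inr fun y hy => mul_nonneg (exp_pos _).le ?_
    have := (mul_pos (exp_pos (p * x)) hux).trans_le (hu hy)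
    exact (pos_of_mul_pos_right this (exp_pos _).le).le

theorem quasiconcaveOn_finiteLaplace_div {a b s : ℝ} {f g : ℝ → ℝ} (hab : a < b)
    (hf : ContinuousOn f (Icc a b)) (hg : ContinuousOn g (Icc a b))
    (hgpos : ∀ t ∈ Icc a b, 0 < g t) (hmono : MonotoneOn (fun t => f t / g t) (Icc a s))
    (hanti : AntitoneOn (fun t => f t / g t) (Icc s b)) :
    QuasiconcaveOn ℝ univ (fun x => finiteLaplace a b f x / finiteLaplace a b g x) := by
  intro c
  obtain ⟨p, q, hpq⟩ := exists_sign_pattern_of_monotoneOn_antitoneOn hmono hanti c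
  have hsign : ∀ t ∈ Icc a b, (p - t) * (q - t) * (f t - c * g t) ≤ 0 := fun t ht => by
    have hfg : f t - c * g t = (f t / g t - c) * g t := by field_simp [(hgpos t ht).ne']
    rw [hfg, ← mul_assoc]
    exact mul_nonpos_of_nonpos_of_nonneg (hpq t ht) (hgpos t ht).le
  convert quasiconcaveOn_exp_mul_finiteLaplace hab.le (by fun_prop) hsign 0 using 1
  ext x
  have hG : 0 < finiteLaplace a b g x :=
    finiteLaplace_pos hab hg (fun t ht => hgpos t (Ioo_subset_Icc_self ht)) x
  simp only [mem_ofPred_eq, mem_univ, true_and]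
  rw [finiteLaplace_sub hab.le hf (by fun_prop), finiteLaplace_const_mul, le_div_iff₀ hG,
    mul_nonneg_iff_of_pos_left (exp_pos _), sub_nonneg]

section Asymptotics

variable {a b : ℝ} {k : ℝ → ℝ}

/- For large `x` the weight `exp (-x * t)` concentrates near `t = a`: the contribution of a
subinterval of `(a, d)` where `k ≥ m > 0` decays strictly slower than the tail over `[d, b]`. -/
theorem eventually_finiteLaplace_pos {d : ℝ} (hk : ContinuousOn k (Icc a b)) (had : a < d)
    (hdb : d ≤ b) (hnonneg : ∀ t ∈ Icc a d, 0 ≤ k t) (hpos : ∀ t ∈ Ioc a d, 0 < k t) :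
    ∀ᶠ x in atTop, 0 < finiteLaplace a b k x := by
  set s₁ := (2 * a + d) / 3
  set s₂ := (a + 2 * d) / 3
  have h₁ : a < s₁ := by simp only [s₁]; linarith
  have h₁₂ : s₁ < s₂ := by simp only [s₁, s₂]; linarith
  have h₂ : s₂ < d := by simp only [s₂]; linarith
  obtain ⟨C, hC⟩ := isCompact_Icc.exists_bound_of_continuousOn hk
  obtain ⟨t₀, ht₀, hmin⟩ := isCompact_Icc.exists_isMinOn (nonempty_Icc.2 h₁₂.le)
    (hk.mono (Icc_subset_Icc h₁.le (h₂.le.trans hdb)))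
  set m := k t₀
  have hm : 0 < m := hpos t₀ ⟨h₁.trans_le ht₀.1, ht₀.2.trans h₂.le⟩
  have hexp : Tendsto (fun x => exp (x * (d - s₂))) atTop atTop :=
    tendsto_exp_atTop.comp (tendsto_id.atTop_mul_const (by linarith))
  filter_upwards [hexp.eventually_gt_atTop (C * (b - d) / (m * (s₂ - s₁))),
    eventually_ge_atTop 0] with x hx hx0
  have hint : ∀ {u v}, a ≤ u → v ≤ b → u ≤ v →
      IntervalIntegrable (fun t => k t * exp (-x * t)) volume u v := fun hu hv huv =>
    intervalIntegrable_mul_exp_neg_mul huv (hk.mono (Icc_subset_Icc hu hv)) x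
  have head : m * (s₂ - s₁) * exp (-x * s₂) ≤ ∫ t in a..d, k t * exp (-x * t) := by
    calc m * (s₂ - s₁) * exp (-x * s₂) = ∫ _ in s₁..s₂, m * exp (-x * s₂) := by
          rw [intervalIntegral.integral_const, smul_eq_mul]; ring
      _ ≤ ∫ t in s₁..s₂, k t * exp (-x * t) :=
          intervalIntegral.integral_mono_on h₁₂.le intervalIntegrable_const
            (hint h₁.le (h₂.le.trans hdb) h₁₂.le) fun t ht =>
            mul_le_mul (hmin ht) (exp_le_exp.2 (by nlinarith [ht.2])) (exp_pos _).le
              (hm.le.trans (hmin ht))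
      _ ≤ ∫ t in a..d, k t * exp (-x * t) :=
          intervalIntegral.integral_mono_interval h₁.le h₁₂.le h₂.le
            ((ae_restrict_iff' measurableSet_Ioc).2 (Eventually.of_forall fun t ht =>
              mul_nonneg (hnonneg t (Ioc_subset_Icc_self ht)) (exp_pos _).le))
            (hint le_rfl hdb had.le)
  have tail : |∫ t in d..b, k t * exp (-x * t)| ≤ C * exp (-x * d) * (b - d) := by
    have := intervalIntegral.norm_integral_le_of_norm_le_const (a := d) (b := b)
      (f := fun t => k t * exp (-x * t)) (C := C * exp (-x * d)) fun t ht => by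
        rw [uIoc_of_le hdb] at ht
        rw [norm_mul, norm_of_nonneg (exp_pos _).le]
        exact mul_le_mul (hC t ⟨had.le.trans ht.1.le, ht.2⟩) (exp_le_exp.2 (by nlinarith [ht.1]))
          (exp_pos _).le ((norm_nonneg _).trans (hC t ⟨had.le.trans ht.1.le, ht.2⟩))
    rwa [abs_of_nonneg (sub_nonneg.2 hdb)] at this
  have hgap : C * exp (-x * d) * (b - d) < m * (s₂ - s₁) * exp (-x * s₂) := by
    have hsplit : exp (-x * s₂) = exp (x * (d - s₂)) * exp (-x * d) := by
      rw [← exp_add]; ring_nf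
    rw [div_lt_iff₀ (by positivity)] at hx
    rw [hsplit]
    nlinarith [exp_pos (-x * d)]
  rw [finiteLaplace, ← intervalIntegral.integral_add_adjacent_intervals (hint le_rfl hdb had.le)
    (hint had.le le_rfl hdb)]
  linarith [neg_abs_le (∫ t in d..b, k t * exp (-x * t))]

theorem eventually_finiteLaplace_pos_of_pos_left (hab : a < b) (hk : ContinuousOn k (Icc a b))
    (hka : 0 < k a) : ∀ᶠ x in atTop, 0 < finiteLaplace a b k x := by
  have hnear : ∀ᶠ t in 𝓝[≥] a, 0 < k t := by
    rw [← nhdsWithin_Icc_eq_nhdsGE hab]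
    exact (hk.continuousWithinAt (left_mem_Icc.2 hab.le)).eventually (lt_mem_nhds hka)
  obtain ⟨d, hd, hsub⟩ := mem_nhdsGE_iff_exists_Icc_subset.1 hnear
  have hpos : ∀ t ∈ Icc a (min d b), 0 < k t := fun t ht =>
    hsub ⟨ht.1, ht.2.trans (min_le_left _ _)⟩
  exact eventually_finiteLaplace_pos hk (lt_min hd hab) (min_le_right _ _)
    (fun t ht => (hpos t ht).le) fun t ht => hpos t (Ioc_subset_Icc_self ht)

end Asymptotics

theorem not_monotoneOn_finiteLaplace_div {a b s : ℝ} {f g : ℝ → ℝ} (has : a < s) (hsb : s ≤ b)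
    (hf : ContinuousOn f (Icc a b)) (hg : ContinuousOn g (Icc a b))
    (hgpos : ∀ t ∈ Icc a b, 0 < g t) (hmono : StrictMonoOn (fun t => f t / g t) (Icc a s))
    (c : ℝ) : ¬ MonotoneOn (fun x => finiteLaplace a b f x / finiteLaplace a b g x) (Ioi c) := by
  have hab : a < b := has.trans_le hsb
  have ha : a ∈ Icc a b := left_mem_Icc.2 hab.le
  have hG : ∀ x, 0 < finiteLaplace a b g x := fun x =>
    finiteLaplace_pos hab hg (fun t ht => hgpos t (Ioo_subset_Icc_self ht)) x
  have hlap : ∀ r x, finiteLaplace a b (fun t => f t - r * g t) x =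
      finiteLaplace a b f x - r * finiteLaplace a b g x := fun r x => by
    rw [finiteLaplace_sub hab.le hf (by fun_prop), finiteLaplace_const_mul]
  have h_above : ∀ᶠ x in atTop, f a / g a < finiteLaplace a b f x / finiteLaplace a b g x := by
    have hsub : ∀ t ∈ Icc a s, f a / g a ≤ f t / g t ∧ (a < t → f a / g a < f t / g t) :=
      fun t ht => ⟨hmono.monotoneOn (left_mem_Icc.2 has.le) ht ht.1,
        hmono (left_mem_Icc.2 has.le) ht⟩
    have ht : ∀ t ∈ Icc a s, 0 < g t := fun t ht => hgpos t ⟨ht.1, ht.2.trans hsb⟩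
    filter_upwards [eventually_finiteLaplace_pos (k := fun t => f t - f a / g a * g t)
      (by fun_prop) has hsb
      (fun t hts => sub_nonneg.2 ((le_div_iff₀ (ht t hts)).1 (hsub t hts).1))
      (fun t hts => sub_pos.2 ((lt_div_iff₀ (ht t (Ioc_subset_Icc_self hts))).1
        ((hsub t (Ioc_subset_Icc_self hts)).2 hts.1)))] with x hx
    rw [hlap, sub_pos] at hx
    exact (lt_div_iff₀ (hG x)).2 hx
  obtain ⟨X, hXc, hX⟩ := ((eventually_gt_atTop c).and h_above).exists
  set R := finiteLaplace a b f X / finiteLaplace a b g X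
  have h_below : ∀ᶠ x in atTop, finiteLaplace a b f x / finiteLaplace a b g x < R := by
    filter_upwards [eventually_finiteLaplace_pos_of_pos_left (k := fun t => -1 * (f t - R * g t))
      hab (by fun_prop) (by linarith [(div_lt_iff₀ (hgpos a ha)).1 hX])] with x hx
    rw [finiteLaplace_const_mul, hlap] at hx
    exact (div_lt_iff₀ (hG x)).2 (by linarith)
  obtain ⟨v, hXv, hv⟩ := ((eventually_gt_atTop X).and h_below).exists
  exact fun hR => (hR hXc (hXc.trans hXv) hXv.le).not_gt hv

theorem stmt_2 (a b : ℝ) (ha : 0 < a) (hab : a < b)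
    (f g : ℝ → ℝ)
    (hf : ContinuousOn f (Icc a b)) (hg : ContinuousOn g (Icc a b))
    (hgpos : ∀ t ∈ Icc a b, 0 < g t)
    (F G : ℝ → ℝ)
    (hF : ∀ x, F x = ∫ t in a..b, f t * Real.exp (-x * t))
    (hG : ∀ x, G x = ∫ t in a..b, g t * Real.exp (-x * t))
    (tstar : ℝ) (htstar : tstar ∈ Ioo a b)
    (hinc : StrictMonoOn (fun t => f t / g t) (Icc a tstar))
    (hdec : StrictAntiOn (fun t => f t / g t) (Icc tstar b))
    (L : ℝ) (hLneg : L < 0)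
    (hL : Tendsto (fun x => deriv F x / deriv G x * G x - F x)
      (𝓝[>] (0 : ℝ)) (𝓝 L)) :
    ∃ xstar > (0 : ℝ), MonotoneOn (fun x => F x / G x) (Ioo 0 xstar) ∧
      AntitoneOn (fun x => F x / G x) (Ioi xstar) := by
  obtain rfl : F = finiteLaplace a b f := funext hF
  obtain rfl : G = finiteLaplace a b g := funext hG
  have hG_pos : ∀ x, 0 < finiteLaplace a b g x := fun x =>
    finiteLaplace_pos hab hg (fun t ht => hgpos t (Ioo_subset_Icc_self ht)) x
  have hG_deriv : ∀ x, deriv (finiteLaplace a b g) x < 0 := fun x => by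
    rw [(hasDerivAt_finiteLaplace hab.le hg x).deriv,
      show (fun t => -t * g t) = fun t => -1 * (t * g t) by ext; ring, finiteLaplace_const_mul]
    linarith [finiteLaplace_pos hab (by fun_prop) (fun t ht =>
      mul_pos (ha.trans ht.1) (hgpos t (Ioo_subset_Icc_self ht))) x]
  have hquasi := quasiconcaveOn_finiteLaplace_div hab hf hg hgpos hinc.monotoneOn hdec.antitoneOn
  refine (Convex.quasiconcaveOn_restrict hquasi (subset_univ _) (convex_Ioi 0)
    ).exists_monotoneOn_antitoneOn (fun hanti => ?_)
    (not_monotoneOn_finiteLaplace_div htstar.1 htstar.2.le hf hg hgpos hinc 0)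
  have hL_nonneg : 0 ≤ L := ge_of_tendsto hL <| eventually_nhdsWithin_of_forall fun x hx =>
    deriv_div_deriv_mul_sub_nonneg_of_antitoneOn isOpen_Ioi hx hanti
      (hasDerivAt_finiteLaplace hab.le hf x).differentiableAt
      (hasDerivAt_finiteLaplace hab.le hg x).differentiableAt (hG_pos x).ne' (hG_deriv x)
  linarith
end

section
/- Let f and g be continuous functions on (0,∞) with g(t) > 0 for all t > 0, and suppose the Laplace transforms F(x) = ∫_0^∞ f(t)·e^{−xt} dt and G(x) = ∫_0^∞ g(t)·e^{−xt} dt converge (i.e., the integrands are integrable on (0,∞)) for every x > 0. Suppose there exists t* ∈ (0,∞) such that f/g is strictly increasing on (0,t*) and strictly decreasing on (t*,∞), and suppose the limit L = lim_{x→0⁺} ( (F′(x)/G′(x))·G(x) − F(x) ) exists. Then F/G is decreasing on (0,∞) if and only if L ≥ 0. -/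
/-!
Write `H = F' / G' * G - F`. Since `(F / G)' = G' H / G ^ 2` with `G' < 0`, the ratio `F / G`
decreases exactly where `H ≥ 0`. The point is that `H` increases wherever `H ≤ 0`: with
`c = F'(x) / G'(x)`, the inequality `H(x) ≤ 0` says that `u = f - c g` has nonnegative Laplace
transform and vanishing first moment `∫ t u(t) e^{-xt} dt`. As `f / g` is unimodal, `u` is
negative outside some `[a, b]` and nonnegative inside, so pairing with `(t - a) (b - t)` makes
the second moment negative, which is `H'(x) > 0`. Hence `H` never becomes negative once its
limit at `0⁺` is nonnegative.
-/

open Real Filter Set MeasureTheory Topology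

noncomputable def laplace (φ : ℝ → ℝ) (x : ℝ) : ℝ :=
  ∫ t in Ioi 0, φ t * exp (-x * t)

def LaplaceIntegrable (φ : ℝ → ℝ) : Prop :=
  ∀ x > 0, IntegrableOn (fun t => φ t * exp (-x * t)) (Ioi 0)

lemma mul_exp_neg_mul_le {x t : ℝ} (hx : 0 < x) : t * exp (-x * t) ≤ 1 / x := by
  rw [le_div_iff₀ hx, neg_mul, exp_neg, ← div_eq_mul_inv, div_mul_eq_mul_div, mul_comm t,
    div_le_one (exp_pos _)]
  linarith [add_one_le_exp (x * t)]

namespace LaplaceIntegrable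

variable {φ ψ : ℝ → ℝ}

lemma add (hφ : LaplaceIntegrable φ) (hψ : LaplaceIntegrable ψ) :
    LaplaceIntegrable (fun t => φ t + ψ t) := fun x hx => by
  simp only [add_mul]
  exact (hφ x hx).add (hψ x hx)

lemma const_mul (hφ : LaplaceIntegrable φ) (c : ℝ) : LaplaceIntegrable (fun t => c * φ t) :=
  fun x hx => by
    simp only [mul_assoc]
    exact (hφ x hx).const_mul c

lemma sub (hφ : LaplaceIntegrable φ) (hψ : LaplaceIntegrable ψ) :
    LaplaceIntegrable (fun t => φ t - ψ t) := by
  simpa only [neg_one_mul, ← sub_eq_add_neg] using hφ.add (hψ.const_mul (-1))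

/-- Splitting `exp (-x t) = exp (-x t / 2) ^ 2`, the factor `t exp (-x t / 2)` is bounded
on `t > 0`. -/
lemma neg_id_mul (hφ : LaplaceIntegrable φ) : LaplaceIntegrable (fun t => -t * φ t) := by
  intro x hx
  have hx2 : 0 < x / 2 := half_pos hx
  have hbound : ∀ᵐ t ∂volume.restrict (Ioi 0), ‖-t * exp (-(x / 2) * t)‖ ≤ 2 / x := by
    filter_upwards [ae_restrict_mem measurableSet_Ioi] with t (ht : 0 < t)
    rw [norm_mul, norm_neg, norm_of_nonneg ht.le, norm_of_nonneg (exp_pos _).le]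
    simpa [one_div_div] using mul_exp_neg_mul_le (t := t) hx2
  have hmeas : AEStronglyMeasurable (fun t => -t * exp (-(x / 2) * t))
      (volume.restrict (Ioi 0)) :=
    (by fun_prop : Continuous fun t : ℝ => -t * exp (-(x / 2) * t)).aestronglyMeasurable
  refine ((hφ _ hx2).bdd_mul hmeas hbound).congr (Eventually.of_forall fun t => ?_)
  have : exp (-x * t) = exp (-(x / 2) * t) * exp (-(x / 2) * t) := by rw [← exp_add]; ring_nf
  simp only [this]
  ring

end LaplaceIntegrable

variable {φ ψ : ℝ → ℝ} {x : ℝ}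

lemma laplace_add (hφ : LaplaceIntegrable φ) (hψ : LaplaceIntegrable ψ) (hx : 0 < x) :
    laplace (fun t => φ t + ψ t) x = laplace φ x + laplace ψ x := by
  simp only [laplace, add_mul]
  exact integral_add (hφ x hx) (hψ x hx)

lemma laplace_const_mul (c : ℝ) : laplace (fun t => c * φ t) x = c * laplace φ x := by
  simp only [laplace, mul_assoc]
  exact integral_const_mul c _

lemma laplace_sub (hφ : LaplaceIntegrable φ) (hψ : LaplaceIntegrable ψ) (hx : 0 < x) :
    laplace (fun t => φ t - ψ t) x = laplace φ x - laplace ψ x := by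
  simp only [laplace, sub_mul]
  exact integral_sub (hφ x hx) (hψ x hx)

lemma hasDerivAt_laplace (hφ : LaplaceIntegrable φ) (hx : 0 < x) :
    HasDerivAt (laplace φ) (laplace (fun t => -t * φ t) x) x := by
  have hx2 : 0 < x / 2 := half_pos hx
  have hball : Metric.ball x (x / 2) ⊆ Ioi (x / 2) := fun y hy => by
    have := (abs_lt.1 (mem_ball_iff_norm.1 hy)).1
    simp only [mem_Ioi]; linarith
  refine (hasDerivAt_integral_of_dominated_loc_of_deriv_le (Metric.ball_mem_nhds x hx2)
    (F' := fun y t => (-t * φ t) * exp (-y * t))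
    (bound := fun t => ‖(-t * φ t) * exp (-(x / 2) * t)‖)
    (eventually_of_mem (Ioi_mem_nhds hx) fun y hy => (hφ y hy).aestronglyMeasurable)
    (hφ x hx) (hφ.neg_id_mul x hx).aestronglyMeasurable ?_
    (hφ.neg_id_mul _ hx2).norm ?_).2
  · filter_upwards [ae_restrict_mem measurableSet_Ioi] with t (ht : 0 < t) y hy
    simp only [norm_mul, norm_eq_abs, abs_exp]
    gcongr
    nlinarith [mem_Ioi.1 (hball hy)]
  · refine Eventually.of_forall fun t y _ => ?_
    exact ((((hasDerivAt_neg y).mul_const t).exp).const_mul (φ t)).congr_deriv (by ring)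

lemma laplace_pos (hφ : LaplaceIntegrable φ) (hx : 0 < x) {b : ℝ} (hb : 0 ≤ b)
    (hnonneg : ∀ t > 0, 0 ≤ φ t) (hpos : ∀ t > b, 0 < φ t) : 0 < laplace φ x := by
  have hae : 0 ≤ᵐ[volume.restrict (Ioi 0)] fun t => φ t * exp (-x * t) := by
    filter_upwards [ae_restrict_mem measurableSet_Ioi] with t (ht : 0 < t)
    exact mul_nonneg (hnonneg t ht) (exp_pos _).le
  rw [laplace, setIntegral_pos_iff_support_of_nonneg_ae hae (hφ x hx)]
  have hsub : Ioi b ⊆ Function.support (fun t => φ t * exp (-x * t)) ∩ Ioi 0 :=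
    fun t ht => ⟨(mul_pos (hpos t ht) (exp_pos _)).ne', lt_of_le_of_lt hb ht⟩
  calc (0 : ENNReal) < volume (Ioi b) := by simp
    _ ≤ _ := measure_mono hsub

lemma laplace_neg_id_mul_neg (hφ : LaplaceIntegrable φ) (hpos : ∀ t > 0, 0 < φ t)
    (hx : 0 < x) :
    laplace (fun t => -t * φ t) x < 0 := by
  have := laplace_pos (hφ.neg_id_mul.const_mul (-1)) hx le_rfl
    (fun t ht => by nlinarith [hpos t ht]) fun t ht => by nlinarith [hpos t ht]
  rw [laplace_const_mul] at this
  linarith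

section Moments

variable {u : ℝ → ℝ}

lemma LaplaceIntegrable.quadratic_mul (hu : LaplaceIntegrable u) (p q r : ℝ) :
    LaplaceIntegrable (fun t => p * (-t * (-t * u t)) + q * (-t * u t) + r * u t) :=
  ((hu.neg_id_mul.neg_id_mul.const_mul p).add (hu.neg_id_mul.const_mul q)).add (hu.const_mul r)

lemma laplace_quadratic_mul (hu : LaplaceIntegrable u) (hx : 0 < x) (p q r : ℝ) :
    laplace (fun t => p * (-t * (-t * u t)) + q * (-t * u t) + r * u t) x =
      p * laplace (fun t => -t * (-t * u t)) x + q * laplace (fun t => -t * u t) x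
        + r * laplace u x := by
  rw [laplace_add ((hu.neg_id_mul.neg_id_mul.const_mul p).add (hu.neg_id_mul.const_mul q))
      (hu.const_mul r) hx, laplace_add (hu.neg_id_mul.neg_id_mul.const_mul p)
      (hu.neg_id_mul.const_mul q) hx, laplace_const_mul, laplace_const_mul, laplace_const_mul]

/-- The weight `(t - a) (b - t)` has the sign of `u`; expanding it, the first moment drops out. -/
lemma laplace_second_moment_neg (hu : LaplaceIntegrable u) (hx : 0 < x)
    (h0 : 0 ≤ laplace u x) (h1 : laplace (fun t => -t * u t) x = 0) {a b : ℝ} (ha : 0 ≤ a)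
    (hab : a ≤ b) (hout : ∀ t > 0, t < a ∨ b < t → u t < 0)
    (hin : ∀ t, a < t → t < b → 0 ≤ u t) :
    laplace (fun t => -t * (-t * u t)) x < 0 := by
  have hweight : (fun t => (t - a) * (b - t) * u t) =
      fun t => (-1) * (-t * (-t * u t)) + (-(a + b)) * (-t * u t) + (-(a * b)) * u t := by
    funext t; ring
  have hpos : 0 < laplace (fun t => (t - a) * (b - t) * u t) x := by
    refine laplace_pos (hweight ▸ hu.quadratic_mul _ _ _) hx (ha.trans hab) (fun t ht => ?_)
      fun t ht => mul_pos_of_neg_of_neg (by nlinarith) (hout t (by linarith) (.inr ht))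
    rcases lt_or_ge t a with hta | hat
    · exact (mul_pos_of_neg_of_neg (by nlinarith) (hout t ht (.inl hta))).le
    rcases le_or_gt b t with hbt | htb
    · rcases hbt.lt_or_eq with hbt | rfl
      · exact (mul_pos_of_neg_of_neg (by nlinarith) (hout t ht (.inr hbt))).le
      · simp
    rcases hat.lt_or_eq with hat | rfl
    · exact mul_nonneg (by nlinarith) (hin t hat htb)
    · simp
  rw [hweight, laplace_quadratic_mul hu hx, h1] at hpos
  nlinarith [mul_nonneg (mul_nonneg ha (ha.trans hab)) h0]

/-- Pairing `u` with the weight `t - a`, which has the sign of `u`. -/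
lemma laplace_first_moment_ne_zero (hu : LaplaceIntegrable u) (hx : 0 < x)
    (h0 : 0 ≤ laplace u x) {a : ℝ} (ha : 0 ≤ a) (hleft : ∀ t > 0, t < a → u t < 0)
    (hright : ∀ t, a < t → 0 < u t) :
    laplace (fun t => -t * u t) x ≠ 0 := by
  intro h1
  have hweight : (fun t => (t - a) * u t) =
      fun t => 0 * (-t * (-t * u t)) + (-1) * (-t * u t) + (-a) * u t := by
    funext t; ring
  have hpos : 0 < laplace (fun t => (t - a) * u t) x := by
    refine laplace_pos (hweight ▸ hu.quadratic_mul _ _ _) hx ha (fun t ht => ?_)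
      fun t ht => mul_pos (by linarith) (hright t ht)
    rcases lt_trichotomy t a with hta | rfl | hat
    · exact (mul_pos_of_neg_of_neg (by linarith) (hleft t ht hta)).le
    · simp
    · exact (mul_pos (by linarith) (hright t hat)).le
  rw [hweight, laplace_quadratic_mul hu hx, h1] at hpos
  nlinarith [mul_nonneg ha h0]

end Moments

theorem StrictMonoOn.exists_crossing {α β : Type*} [ConditionallyCompleteLinearOrder α]
    [LinearOrder β] {q : α → β} {s : Set α} (hq : StrictMonoOn q s) {m : α}
    (hm : m ∈ lowerBounds s) {c : β} (hc : ∃ x ∈ s, c ≤ q x) :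
    ∃ a, m ≤ a ∧ ∀ x ∈ s, (x < a → q x < c) ∧ (a < x → c < q x) := by
  obtain ⟨x₀, hx₀, hcx₀⟩ := hc
  set A := {x ∈ s | c ≤ q x}
  have hA : A.Nonempty := ⟨x₀, hx₀, hcx₀⟩
  have hAbdd : BddBelow A := ⟨m, fun x hx => hm hx.1⟩
  refine ⟨sInf A, le_csInf hA fun x hx => hm hx.1,
    fun x hx => ⟨fun hxa => ?_, fun hax => ?_⟩⟩
  · by_contra h
    exact (csInf_le hAbdd ⟨hx, not_lt.1 h⟩).not_gt hxa
  · obtain ⟨y, ⟨hy, hcy⟩, hyx⟩ := exists_lt_of_csInf_lt hA hax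
    exact hcy.trans_lt (hq hy hx hyx)

theorem StrictAntiOn.exists_crossing {α β : Type*} [ConditionallyCompleteLinearOrder α]
    [LinearOrder β] {q : α → β} {s : Set α} (hq : StrictAntiOn q s) {m : α}
    (hm : m ∈ lowerBounds s) {c : β} (hc : ∃ x ∈ s, q x ≤ c) :
    ∃ b, m ≤ b ∧ ∀ x ∈ s, (x < b → c < q x) ∧ (b < x → q x < c) :=
  hq.dual_right.exists_crossing hm (c := OrderDual.toDual c) hc

theorem StrictMonoOn.Ioc_of_continuousWithinAt {q : ℝ → ℝ} {a b : ℝ}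
    (hq : StrictMonoOn q (Ioo a b)) (hb : ContinuousWithinAt q (Ioo a b) b) :
    StrictMonoOn q (Ioc a b) := by
  have hlt : ∀ x ∈ Ioo a b, q x < q b := fun x hx => by
    obtain ⟨y, hxy, hyb⟩ := exists_between hx.2
    have hay : a < y := hx.1.trans hxy
    have hyb' : q y ≤ q b :=
      ContinuousWithinAt.closure_le (by rw [closure_Ioo hyb.ne]; exact right_mem_Icc.2 hyb.le)
        continuousWithinAt_const (hb.mono (Ioo_subset_Ioo_left hay.le))
        fun w hw => (hq ⟨hay, hyb⟩ ⟨hay.trans hw.1, hw.2⟩ hw.1).le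
    exact (hq hx ⟨hay, hyb⟩ hxy).trans_le hyb'
  intro x hx y hy hxy
  rcases hy.2.lt_or_eq with hyb | rfl
  · exact hq ⟨hx.1, hxy.trans hyb⟩ ⟨hy.1, hyb⟩ hxy
  · exact hlt x ⟨hx.1, hxy⟩

theorem StrictAntiOn.Ici_of_continuousWithinAt {q : ℝ → ℝ} {a : ℝ}
    (hq : StrictAntiOn q (Ioi a)) (ha : ContinuousWithinAt q (Ioi a) a) :
    StrictAntiOn q (Ici a) := by
  have hlt : ∀ x ∈ Ioi a, q x < q a := fun x (hx : a < x) => by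
    obtain ⟨y, hay, hyx⟩ := exists_between hx
    have hya' : q y ≤ q a :=
      ContinuousWithinAt.closure_le (by rw [closure_Ioo hay.ne]; exact left_mem_Icc.2 hay.le)
        continuousWithinAt_const (ha.mono Ioo_subset_Ioi_self)
        fun w hw => (hq hw.1 (hay : a < y) hw.2).le
    exact (hq (hay : a < y) hx hyx).trans_le hya'
  intro x (hx : a ≤ x) y hy hxy
  rcases hx.lt_or_eq with hax | rfl
  · exact hq hax (hax.trans hxy) hxy
  · exact hlt y hxy

theorem exists_sign_pattern_of_unimodal {q : ℝ → ℝ} {m : ℝ} (hm : 0 < m)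
    (hmono : StrictMonoOn q (Ioc 0 m)) (hanti : StrictAntiOn q (Ici m)) (c : ℝ) :
    (∃ a b, 0 ≤ a ∧ a ≤ b ∧ (∀ t > 0, t < a ∨ b < t → q t < c) ∧
        ∀ t, a < t → t < b → c < q t) ∨
      ∃ a, 0 ≤ a ∧ (∀ t > 0, t < a → q t < c) ∧ ∀ t, a < t → c < q t := by
  by_cases hcm : q m < c
  · refine .inl ⟨0, 0, le_rfl, le_rfl, fun t ht _ => ?_,
      fun t h0t ht0 => absurd h0t ht0.not_gt⟩
    rcases le_total t m with htm | hmt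
    · exact (hmono.monotoneOn ⟨ht, htm⟩ ⟨hm, le_rfl⟩ htm).trans_lt hcm
    · exact (hanti.antitoneOn self_mem_Ici hmt hmt).trans_lt hcm
  push Not at hcm
  obtain ⟨a, ha, hcross⟩ :=
    hmono.exists_crossing (m := 0) (fun x hx => hx.1.le) ⟨m, ⟨hm, le_rfl⟩, hcm⟩
  have ham : a ≤ m := not_lt.1 fun h => ((hcross m ⟨hm, le_rfl⟩).1 h).not_ge hcm
  have hinner : ∀ t, a < t → t ≤ m → c < q t := fun t hat htm =>
    (hcross t ⟨ha.trans_lt hat, htm⟩).2 hat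
  by_cases hright : ∃ x ∈ Ici m, q x ≤ c
  · obtain ⟨b, hmb, hcross'⟩ := hanti.exists_crossing (fun x hx => hx) hright
    refine .inl ⟨a, b, ha, ham.trans hmb, fun t ht htab => ?_, fun t hat htb => ?_⟩
    · rcases htab with hta | hbt
      · exact (hcross t ⟨ht, by linarith⟩).1 hta
      · exact (hcross' t (by simp only [mem_Ici]; linarith)).2 hbt
    · rcases le_total t m with htm | hmt
      · exact hinner t hat htm
      · exact (hcross' t hmt).1 htb
  · push Not at hright
    refine .inr ⟨a, ha, fun t ht hta => (hcross t ⟨ht, by linarith⟩).1 hta, fun t hat => ?_⟩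
    rcases le_total t m with htm | hmt
    · exact hinner t hat htm
    · exact hright t hmt

theorem laplace_second_moment_lt_of_unimodal {f g : ℝ → ℝ} (hf : LaplaceIntegrable f)
    (hg : LaplaceIntegrable g) (hgpos : ∀ t > 0, 0 < g t) {m : ℝ} (hm : 0 < m)
    (hmono : StrictMonoOn (fun t => f t / g t) (Ioc 0 m))
    (hanti : StrictAntiOn (fun t => f t / g t) (Ici m)) {x c : ℝ} (hx : 0 < x)
    (h0 : c * laplace g x ≤ laplace f x)
    (h1 : laplace (fun t => -t * f t) x = c * laplace (fun t => -t * g t) x) :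
    laplace (fun t => -t * (-t * f t)) x < c * laplace (fun t => -t * (-t * g t)) x := by
  set u : ℝ → ℝ := fun t => f t - c * g t
  have hu : LaplaceIntegrable u := hf.sub (hg.const_mul c)
  have hlin : ∀ {φ ψ : ℝ → ℝ}, LaplaceIntegrable φ → LaplaceIntegrable ψ →
      laplace (fun t => φ t - c * ψ t) x = laplace φ x - c * laplace ψ x := fun hφ hψ => by
    rw [laplace_sub hφ (hψ.const_mul c) hx, laplace_const_mul]
  have hu0 : 0 ≤ laplace u x := by rw [hlin hf hg]; linarith
  have hu1 : laplace (fun t => -t * u t) x = 0 := by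
    rw [show (fun t => -t * u t) = fun t => -t * f t - c * (-t * g t) by funext t; ring,
      hlin hf.neg_id_mul hg.neg_id_mul, h1, sub_self]
  have hu2 : laplace (fun t => -t * (-t * u t)) x =
      laplace (fun t => -t * (-t * f t)) x - c * laplace (fun t => -t * (-t * g t)) x := by
    rw [show (fun t => -t * (-t * u t)) = fun t => -t * (-t * f t) - c * (-t * (-t * g t)) by
      funext t; ring, hlin hf.neg_id_mul.neg_id_mul hg.neg_id_mul.neg_id_mul]
  have hfactor : ∀ t > 0, u t = g t * (f t / g t - c) := fun t ht => by
    field_simp [(hgpos t ht).ne']; ring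
  have hneg : ∀ t > 0, f t / g t < c → u t < 0 := fun t ht h => by
    rw [hfactor t ht]; exact mul_neg_of_pos_of_neg (hgpos t ht) (sub_neg.2 h)
  have hpos : ∀ t > 0, c < f t / g t → 0 < u t := fun t ht h => by
    rw [hfactor t ht]; exact mul_pos (hgpos t ht) (sub_pos.2 h)
  rcases exists_sign_pattern_of_unimodal hm hmono hanti c with
    ⟨a, b, ha, hab, hout, hin⟩ | ⟨a, ha, hleft, hright⟩
  · have := laplace_second_moment_neg hu hx hu0 hu1 ha hab
      (fun t ht h => hneg t ht (hout t ht h))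
      fun t hat htb => (hpos t (ha.trans_lt hat) (hin t hat htb)).le
    linarith
  · exact absurd hu1 (laplace_first_moment_ne_zero hu hx hu0 ha
      (fun t ht h => hneg t ht (hleft t ht h))
      fun t hat => hpos t (ha.trans_lt hat) (hright t hat))

/-- If `H x < 0`, then `H` has a minimum on some `[y, x]` with `H y > H x`; it lies in `(y, x]`,
where `H` is negative but has nonpositive derivative. -/
theorem nonneg_of_tendsto_nhdsGT_of_deriv_pos {H H' : ℝ → ℝ} {a L : ℝ}
    (hL : Tendsto H (𝓝[>] a) (𝓝 L)) (hL0 : 0 ≤ L) (hH : ∀ x > a, HasDerivAt H (H' x) x)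
    (hpos : ∀ x > a, H x < 0 → 0 < H' x) {x : ℝ} (hx : a < x) : 0 ≤ H x := by
  by_contra! hHx
  obtain ⟨y, hHy, hay, hyx⟩ := ((hL.eventually (lt_mem_nhds (hHx.trans_le hL0))).and
    (Ioo_mem_nhdsGT hx)).exists
  obtain ⟨z, hz, hmin⟩ := isCompact_Icc.exists_isMinOn (nonempty_Icc.2 hyx.le)
    fun w hw => (hH w (hay.trans_le hw.1)).continuousAt.continuousWithinAt
  have hHz : H z < 0 := (hmin ⟨hyx.le, le_rfl⟩ : H z ≤ H x).trans_lt hHx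
  have hyz : y < z := hz.1.lt_of_ne fun hyz => by
    have : H z ≤ H x := hmin ⟨hyx.le, le_rfl⟩
    subst hyz; linarith
  have hz0 : a < z := hay.trans hyz
  have hleft : 0 ≤ (y - z) * H' z := by
    have := (hmin.on_subset (Icc_subset_Icc_right hz.2)).localize.hasFDerivWithinAt_nonneg
      (hH z hz0).hasDerivWithinAt (y := y - z) (mem_posTangentConeAt_of_segment_subset ?_)
    · simpa using this
    · rw [add_sub_cancel, segment_eq_uIcc, uIcc_of_ge hyz.le]
  nlinarith [hpos z hz0 hHz]

section MonotoneRule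

variable {F G F' G' F'' G'' : ℝ → ℝ}

theorem antitoneOn_div_iff_forall_nonneg (hF : ∀ x > 0, HasDerivAt F (F' x) x)
    (hG : ∀ x > 0, HasDerivAt G (G' x) x) (hG0 : ∀ x > 0, G x ≠ 0)
    (hG'neg : ∀ x > 0, G' x < 0) :
    AntitoneOn (fun x => F x / G x) (Ioi 0) ↔ ∀ x > 0, 0 ≤ F' x / G' x * G x - F x := by
  have hd : ∀ x > 0, HasDerivAt (fun y => F y / G y)
      (G' x / G x ^ 2 * (F' x / G' x * G x - F x)) x := fun x hx =>
    ((hF x hx).div (hG x hx) (hG0 x hx)).congr_deriv (by field_simp [(hG'neg x hx).ne])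
  have hsign : ∀ x > 0, G' x / G x ^ 2 * (F' x / G' x * G x - F x) ≤ 0 ↔
      0 ≤ F' x / G' x * G x - F x := fun x hx => by
    have hk : G' x / G x ^ 2 < 0 := div_neg_of_neg_of_pos (hG'neg x hx) (by positivity [hG0 x hx])
    exact ⟨fun h => nonneg_of_mul_nonpos_right h hk, mul_nonpos_of_nonpos_of_nonneg hk.le⟩
  constructor
  · intro hanti x hx
    rw [← hsign x hx, ← (hd x hx).deriv, ← derivWithin_of_isOpen isOpen_Ioi hx]
    exact hanti.derivWithin_nonpos
  · intro hH
    refine antitoneOn_of_deriv_nonpos (convex_Ioi 0)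
      (fun x hx => (hd x hx).continuousAt.continuousWithinAt) (fun x hx => ?_) fun x hx => ?_
    · rw [interior_Ioi] at hx
      exact (hd x hx).differentiableAt.differentiableWithinAt
    · rw [interior_Ioi] at hx
      rw [(hd x hx).deriv]
      exact (hsign x hx).2 (hH x hx)

theorem antitoneOn_div_iff_of_tendsto {L : ℝ} (hF : ∀ x > 0, HasDerivAt F (F' x) x)
    (hG : ∀ x > 0, HasDerivAt G (G' x) x) (hF' : ∀ x > 0, HasDerivAt F' (F'' x) x)
    (hG' : ∀ x > 0, HasDerivAt G' (G'' x) x) (hGpos : ∀ x > 0, 0 < G x)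
    (hG'neg : ∀ x > 0, G' x < 0)
    (hH : ∀ x > 0, F' x / G' x * G x - F x < 0 → F' x * G'' x < F'' x * G' x)
    (hL : Tendsto (fun x => F' x / G' x * G x - F x) (𝓝[>] 0) (𝓝 L)) :
    AntitoneOn (fun x => F x / G x) (Ioi 0) ↔ 0 ≤ L := by
  rw [antitoneOn_div_iff_forall_nonneg hF hG (fun x hx => (hGpos x hx).ne') hG'neg]
  refine ⟨fun h => ge_of_tendsto hL (eventually_nhdsWithin_of_forall h), fun hL0 x hx => ?_⟩
  refine nonneg_of_tendsto_nhdsGT_of_deriv_pos hL hL0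
    (fun x hx => (((hF' x hx).div (hG' x hx) (hG'neg x hx).ne).mul (hG x hx)).sub (hF x hx))
    (fun x hx hHx => ?_) hx
  rw [Pi.div_apply, div_mul_cancel₀ _ (hG'neg x hx).ne, add_sub_cancel_right]
  exact mul_pos (div_pos (sub_pos.2 (hH x hx hHx)) (sq_pos_of_neg (hG'neg x hx))) (hGpos x hx)

end MonotoneRule

theorem stmt_3 (f g : ℝ → ℝ)
    (hf : ContinuousOn f (Ioi 0)) (hg : ContinuousOn g (Ioi 0))
    (hgpos : ∀ t ∈ Ioi (0 : ℝ), 0 < g t)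
    (hfint : ∀ x > (0 : ℝ), IntegrableOn (fun t => f t * Real.exp (-x * t)) (Ioi 0))
    (hgint : ∀ x > (0 : ℝ), IntegrableOn (fun t => g t * Real.exp (-x * t)) (Ioi 0))
    (F G : ℝ → ℝ)
    (hF : ∀ x, F x = ∫ t in Ioi (0 : ℝ), f t * Real.exp (-x * t))
    (hG : ∀ x, G x = ∫ t in Ioi (0 : ℝ), g t * Real.exp (-x * t))
    (tstar : ℝ) (htstar : tstar ∈ Ioi (0 : ℝ))
    (hinc : StrictMonoOn (fun t => f t / g t) (Ioo 0 tstar))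
    (hdec : StrictAntiOn (fun t => f t / g t) (Ioi tstar))
    (L : ℝ)
    (hL : Tendsto (fun x => deriv F x / deriv G x * G x - F x)
      (𝓝[>] (0 : ℝ)) (𝓝 L)) :
    AntitoneOn (fun x => F x / G x) (Ioi 0) ↔ 0 ≤ L := by
  obtain rfl : F = laplace f := funext hF
  obtain rfl : G = laplace g := funext hG
  have hfL : LaplaceIntegrable f := hfint
  have hgL : LaplaceIntegrable g := hgint
  have hq : ContinuousWithinAt (fun t => f t / g t) (Ioi 0) tstar :=
    (hf.div hg fun t ht => (hgpos t ht).ne') tstar htstar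
  have hmono := hinc.Ioc_of_continuousWithinAt (hq.mono Ioo_subset_Ioi_self)
  have hanti := hdec.Ici_of_continuousWithinAt (hq.mono (Ioi_subset_Ioi (le_of_lt htstar)))
  have hG'neg : ∀ x > 0, laplace (fun t => -t * g t) x < 0 := fun x hx =>
    laplace_neg_id_mul_neg hgL hgpos hx
  refine antitoneOn_div_iff_of_tendsto (fun x hx => hasDerivAt_laplace hfL hx)
    (fun x hx => hasDerivAt_laplace hgL hx) (fun x hx => hasDerivAt_laplace hfL.neg_id_mul hx)
    (fun x hx => hasDerivAt_laplace hgL.neg_id_mul hx)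
    (fun x hx => laplace_pos hgL hx le_rfl (fun t ht => (hgpos t ht).le) hgpos) hG'neg
    (fun x hx hH => ?_) (hL.congr' ?_)
  · set c := laplace (fun t => -t * f t) x / laplace (fun t => -t * g t) x
    have h1 : laplace (fun t => -t * f t) x = c * laplace (fun t => -t * g t) x :=
      (div_mul_cancel₀ _ (hG'neg x hx).ne).symm
    have h2 := laplace_second_moment_lt_of_unimodal hfL hgL hgpos htstar hmono hanti hx
      (by linarith) h1
    rw [h1, mul_right_comm]
    exact mul_lt_mul_of_neg_right h2 (hG'neg x hx)
  · filter_upwards [self_mem_nhdsWithin] with x (hx : 0 < x)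
    rw [(hasDerivAt_laplace hfL hx).deriv, (hasDerivAt_laplace hgL hx).deriv]
end

section
/- For v ≥ 1, the function h_v(t) = (cosh(vt) + v·sinh(vt)·sinh t) / ((cosh t + 1)·cosh(vt)) is strictly increasing on (0,∞), with lim_{t→0⁺} h_v(t) = 1/2 and lim_{t→∞} h_v(t) = v; in particular 1/2 < h_v(t) < v for all t > 0. -/
/-!
Write `c = cosh t`, `s = sinh t`, `C = cosh (v t)`, `S = sinh (v t)`. The quotient rule together
with `c² - s² = C² - S² = 1` gives `h_v' = (C (v S (c + 1) - s C) + v² s (c + 1)) / ((c + 1) C)²`,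
and `s C ≤ S c ≤ v S (c + 1)` because `tanh` is increasing and `v ≥ 1`; so `h_v' > 0`.
The limits come from `h_v(0) = 1/2` and from `h_v = (c⁻¹ + v tanh (v t) tanh t) / (1 + c⁻¹)`.
Strict monotonicity then places every value strictly between the two limits.
-/

open Real Filter Set Topology

section StrictMonoOnLimits

variable {α β : Type*} [LinearOrder α] [Preorder β] [TopologicalSpace β] [OrderClosedTopology β]
  {f : α → β} {a t : α} {L : β}

theorem StrictMonoOn.lt_of_tendsto_atTop [NoMaxOrder α] (hf : StrictMonoOn f (Ioi a))
    (hL : Tendsto f atTop (𝓝 L)) (ht : a < t) : f t < L := by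
  have : Nonempty α := ⟨a⟩
  obtain ⟨t', htt'⟩ := exists_gt t
  have ht' : a < t' := ht.trans htt'
  refine (hf ht ht' htt').trans_le (ge_of_tendsto hL ?_)
  filter_upwards [eventually_ge_atTop t'] with s hs
  exact hf.monotoneOn ht' (ht'.trans_le hs) hs

theorem StrictMonoOn.lt_of_tendsto_nhdsGT [TopologicalSpace α] [OrderTopology α]
    [DenselyOrdered α] (hf : StrictMonoOn f (Ioi a)) (hL : Tendsto f (𝓝[>] a) (𝓝 L))
    (ht : a < t) : L < f t := by
  have := nhdsGT_neBot_of_exists_gt ⟨t, ht⟩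
  obtain ⟨s, has, hst⟩ := exists_between ht
  refine (le_of_tendsto hL ?_).trans_lt (hf has ht hst)
  filter_upwards [Ioo_mem_nhdsGT has] with u hu
  exact hf.monotoneOn hu.1 has hu.2.le

end StrictMonoOnLimits

namespace Real

theorem sinh_mul_cosh_le_of_le {x y : ℝ} (h : x ≤ y) : sinh x * cosh y ≤ sinh y * cosh x := by
  have : 0 ≤ sinh (y - x) := sinh_nonneg_iff.mpr (sub_nonneg.mpr h)
  rw [sinh_sub] at this
  linarith

theorem tendsto_cosh_atTop : Tendsto cosh atTop atTop := by
  refine tendsto_atTop_mono (fun t => ?_) (tendsto_exp_atTop.atTop_div_const two_pos)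
  rw [cosh_eq]
  linarith [exp_pos (-t)]

theorem tendsto_tanh_atTop : Tendsto tanh atTop (𝓝 1) := by
  have htanh : ∀ t, tanh t = 1 - exp (-t) * (cosh t)⁻¹ := fun t => by
    rw [tanh_eq_sinh_div_cosh, ← cosh_sub_sinh]
    field_simp
    ring
  have hlim : Tendsto (fun t => 1 - exp (-t) * (cosh t)⁻¹) atTop (𝓝 (1 - 0 * 0)) :=
    tendsto_const_nhds.sub
      (tendsto_exp_neg_atTop_nhds_zero.mul tendsto_cosh_atTop.inv_tendsto_atTop)
  rw [mul_zero, sub_zero] at hlim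
  exact hlim.congr fun t => (htanh t).symm

end Real

noncomputable def hyperbolicRatio (v t : ℝ) : ℝ :=
  (cosh (v * t) + v * sinh (v * t) * sinh t) / ((cosh t + 1) * cosh (v * t))

theorem continuous_hyperbolicRatio (v : ℝ) : Continuous (hyperbolicRatio v) :=
  Continuous.div (by fun_prop) (by fun_prop) fun t => by positivity

theorem hasDerivAt_hyperbolicRatio (v x : ℝ) :
    HasDerivAt (hyperbolicRatio v)
      ((cosh (v * x) * (v * sinh (v * x) * (cosh x + 1) - sinh x * cosh (v * x)) +
          v ^ 2 * sinh x * (cosh x + 1)) / ((cosh x + 1) * cosh (v * x)) ^ 2) x := by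
  have hvx : HasDerivAt (fun t => v * t) v x := by simpa using (hasDerivAt_id x).const_mul v
  have hnum : HasDerivAt (fun t => cosh (v * t) + v * sinh (v * t) * sinh t) _ x :=
    hvx.cosh.add ((hvx.sinh.const_mul v).mul (hasDerivAt_sinh x))
  have hden : HasDerivAt (fun t => (cosh t + 1) * cosh (v * t)) _ x :=
    ((hasDerivAt_cosh x).add_const 1).mul hvx.cosh
  refine (hnum.div hden (by positivity)).congr_deriv ?_
  congr 1
  linear_combination (v * sinh (v * x) * cosh (v * x)) * cosh_sq_sub_sinh_sq x +
    (v ^ 2 * sinh x * (cosh x + 1)) * cosh_sq_sub_sinh_sq (v * x)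

theorem strictMonoOn_hyperbolicRatio {v : ℝ} (hv : 1 ≤ v) : StrictMonoOn (hyperbolicRatio v) (Ioi 0) := by
  refine strictMonoOn_of_hasDerivWithinAt_pos (convex_Ioi 0) (continuous_hyperbolicRatio v).continuousOn
    (fun x _ => (hasDerivAt_hyperbolicRatio v x).hasDerivWithinAt) fun x hx => ?_
  rw [interior_Ioi] at hx
  have hs : 0 < sinh x := sinh_pos_iff.mpr hx
  have hS : 0 < sinh (v * x) := sinh_pos_iff.mpr (mul_pos (by linarith) hx)
  have hSc : sinh x * cosh (v * x) ≤ v * sinh (v * x) * (cosh x + 1) :=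
    calc sinh x * cosh (v * x) ≤ sinh (v * x) * cosh x :=
          sinh_mul_cosh_le_of_le (le_mul_of_one_le_left hx.le hv)
      _ ≤ v * sinh (v * x) * (cosh x + 1) := by
          nlinarith [mul_nonneg (mul_nonneg (sub_nonneg.mpr hv) hS.le) (cosh_pos x).le]
  have : 0 ≤ cosh (v * x) * (v * sinh (v * x) * (cosh x + 1) - sinh x * cosh (v * x)) :=
    mul_nonneg (cosh_pos _).le (sub_nonneg.mpr hSc)
  have : 0 < v ^ 2 * sinh x * (cosh x + 1) := by positivity
  positivity

theorem tendsto_hyperbolicRatio_nhdsGT_zero (v : ℝ) : Tendsto (hyperbolicRatio v) (𝓝[>] 0) (𝓝 (1 / 2)) := by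
  have h0 : hyperbolicRatio v 0 = 1 / 2 := by norm_num [hyperbolicRatio]
  exact h0 ▸ ((continuous_hyperbolicRatio v).tendsto 0).mono_left nhdsWithin_le_nhds

theorem tendsto_hyperbolicRatio_atTop {v : ℝ} (hv : 0 < v) : Tendsto (hyperbolicRatio v) atTop (𝓝 v) := by
  have hform : ∀ t, hyperbolicRatio v t =
      ((cosh t)⁻¹ + v * tanh (v * t) * tanh t) / (1 + (cosh t)⁻¹) := fun t => by
    have := cosh_pos t
    have := cosh_pos (v * t)
    rw [hyperbolicRatio, tanh_eq_sinh_div_cosh, tanh_eq_sinh_div_cosh]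
    field_simp
  have hinv : Tendsto (fun t => (cosh t)⁻¹) atTop (𝓝 0) := tendsto_cosh_atTop.inv_tendsto_atTop
  have htanh : Tendsto (fun t => tanh (v * t)) atTop (𝓝 1) :=
    tendsto_tanh_atTop.comp (tendsto_id.const_mul_atTop hv)
  have hlim := (hinv.add ((htanh.const_mul v).mul tendsto_tanh_atTop)).div
    (tendsto_const_nhds.add hinv) (by norm_num : (1 : ℝ) + 0 ≠ 0)
  rw [zero_add, mul_one, mul_one, add_zero, div_one] at hlim
  exact hlim.congr fun t => (hform t).symm

theorem stmt_10 (v : ℝ) (hv : 1 ≤ v) :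
    StrictMonoOn
      (fun t => (Real.cosh (v * t) + v * Real.sinh (v * t) * Real.sinh t) /
        ((Real.cosh t + 1) * Real.cosh (v * t))) (Ioi 0) ∧
    Tendsto
      (fun t => (Real.cosh (v * t) + v * Real.sinh (v * t) * Real.sinh t) /
        ((Real.cosh t + 1) * Real.cosh (v * t))) (𝓝[>] (0 : ℝ)) (𝓝 (1 / 2)) ∧
    Tendsto
      (fun t => (Real.cosh (v * t) + v * Real.sinh (v * t) * Real.sinh t) /
        ((Real.cosh t + 1) * Real.cosh (v * t))) atTop (𝓝 v) ∧
    ∀ t > (0 : ℝ),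
      1 / 2 < (Real.cosh (v * t) + v * Real.sinh (v * t) * Real.sinh t) /
        ((Real.cosh t + 1) * Real.cosh (v * t)) ∧
      (Real.cosh (v * t) + v * Real.sinh (v * t) * Real.sinh t) /
        ((Real.cosh t + 1) * Real.cosh (v * t)) < v := by
  have hmono := strictMonoOn_hyperbolicRatio hv
  have hzero := tendsto_hyperbolicRatio_nhdsGT_zero v
  have hinfty := tendsto_hyperbolicRatio_atTop (zero_lt_one.trans_le hv)
  exact ⟨hmono, hzero, hinfty, fun t ht =>
    ⟨hmono.lt_of_tendsto_nhdsGT hzero ht, hmono.lt_of_tendsto_atTop hinfty ht⟩⟩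
end
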